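/- arXiv:1407.0215 — 3 statements merged into one kernel-verified Lean document; each statement's English description precedes it below -/
import Mathlib

section
/- Let x = (f₁,...,f_k) be a state with m breakpoints a₁ < ⋯ < a_m, and let y = (h₁,...,h_k) be a state with d(y,x) < ε ≤ d₀(x)/3, where d₀(x) is the minimal gap between consecutive points of {0, a₁,...,a_m, 1}. Then y has exactly m breakpoints b₁ < ⋯ < b_m, |b_i − a_i| < ε for all i, and each h_j equals Σ_{i=0}^m f_j(a_i)·1_{[b_i, b_{i+1})} (with b₀ = 0, b_{m+1} = 1); in particular h_j takes the same sequence of values as f_j. -/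
open Set MeasureTheory

namespace CWR

/-- A "lineage": a function from ℝ (representing [0,1)) to subsets of {1,…,N}. -/
abbrev Lin (N : ℕ) := ℝ → Finset (Fin N)

/-- Right local constancy (right continuity for piecewise-constant functions) at `s`. -/
def RightConstAt (N : ℕ) (f : Lin N) (s : ℝ) : Prop :=
  ∃ ε > 0, ∀ u ∈ Set.Ico s (s + ε), f u = f s

/-- Local constancy (continuity for piecewise-constant functions) at `s`. -/
def ContAt (N : ℕ) (f : Lin N) (s : ℝ) : Prop :=
  ∃ ε > 0, ∀ u ∈ Set.Ioo (s - ε) (s + ε), f u = f s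

/-- Membership in `S_{[0,1)}(𝒫)`: right-continuous, piecewise constant with at most
finitely many discontinuity points, normalized to `∅` off `[0,1)`. -/
def MemS (N : ℕ) (f : Lin N) : Prop :=
  (∀ s ∈ Set.Ico (0:ℝ) 1, RightConstAt N f s) ∧
  {s ∈ Set.Ioo (0:ℝ) 1 | ¬ ContAt N f s}.Finite ∧
  (∀ s, s ∉ Set.Ico (0:ℝ) 1 → f s = ∅)

/-- The discrete metric `d_p` on `𝒫`. -/
noncomputable def dp (N : ℕ) (A B : Finset (Fin N)) : ℝ := if A = B then 0 else 1

/-- The metric `d_L(f,h) = ∫₀¹ d_p(f(s),h(s)) ds`. -/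
noncomputable def dL (N : ℕ) (f h : Lin N) : ℝ :=
  ∫ s in Set.Ioo (0:ℝ) 1, dp N (f s) (h s)

/-- A state: a finite set of lineages whose nonempty values partition `{1,…,N}`
at each point of `[0,1)`, none identically empty. -/
def IsState (N : ℕ) (x : Set (Lin N)) : Prop :=
  x.Finite ∧ (∀ f ∈ x, MemS N f) ∧
  (∀ f ∈ x, ∃ s ∈ Set.Ico (0:ℝ) 1, f s ≠ ∅) ∧
  (∀ s ∈ Set.Ico (0:ℝ) 1,
    (∀ n : Fin N, ∃ f ∈ x, n ∈ f s) ∧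
    (∀ f ∈ x, ∀ g ∈ x, f ≠ g → Disjoint (f s) (g s)))

/-- The set of breakpoints of a state. -/
def Bp (N : ℕ) (x : Set (Lin N)) : Set ℝ :=
  {s ∈ Set.Ioo (0:ℝ) 1 | ∃ f ∈ x, ¬ ContAt N f s}

/-- The number of breakpoints of a state. -/
noncomputable def nBp (N : ℕ) (x : Set (Lin N)) : ℕ := (Bp N x).ncard

/-- Distance from a lineage to a set of lineages. -/
noncomputable def dLset (N : ℕ) (f : Lin N) (y : Set (Lin N)) : ℝ :=
  sInf (dL N f '' y)

/-- The metric `d` on the state space `E`. -/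
noncomputable def dE (N : ℕ) (x y : Set (Lin N)) : ℝ :=
  max (sSup ((fun f => dLset N f y) '' x)) (sSup ((fun h => dLset N h x) '' y))
  + |(x.ncard : ℝ) - (y.ncard : ℝ)| + |(nBp N x : ℝ) - (nBp N y : ℝ)|

/-- The minimal gap `d₀(x)` between consecutive points of `{0} ∪ Bp(x) ∪ {1}`
(equivalently, the minimum of `b - a` over pairs `a < b` of such points). -/
noncomputable def d0 (N : ℕ) (x : Set (Lin N)) : ℝ :=
  sInf {t : ℝ | ∃ a ∈ insert (0:ℝ) (insert 1 (Bp N x)),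
    ∃ b ∈ insert (0:ℝ) (insert 1 (Bp N x)), a < b ∧ t = b - a}

/-- Pointwise union of two lineages: `(f ∨ h)(s) = f(s) ∪ h(s)`. -/
def join (N : ℕ) (f h : Lin N) : Lin N := fun s => f s ∪ h s

/-- Left truncation `f^{(u−)}`. -/
noncomputable def truncL (N : ℕ) (f : Lin N) (u : ℝ) : Lin N := fun s => if s < u then f s else ∅

/-- Right truncation `f^{(u+)}`. -/
noncomputable def truncR (N : ℕ) (f : Lin N) (u : ℝ) : Lin N := fun s => if s < u then ∅ else f s

/-- Coalescence of lineages `f` and `g` in state `x`. -/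
def coal (N : ℕ) (x : Set (Lin N)) (f g : Lin N) : Set (Lin N) :=
  insert (join N f g) (x \ {f, g})

/-- Recombination of lineage `f` of state `x` at breakpoint `u`. -/
def recomb (N : ℕ) (x : Set (Lin N)) (f : Lin N) (u : ℝ) : Set (Lin N) :=
  insert (truncL N f u) (insert (truncR N f u) (x \ {f}))

/-- Left endpoint of the support of a lineage. -/
noncomputable def startOf (N : ℕ) (f : Lin N) : ℝ :=
  sInf {s | s ∈ Set.Ico (0:ℝ) 1 ∧ f s ≠ ∅}

/-- The ranking order on lineages: smaller left endpoint of support,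
ties broken by the minimal element carried at that endpoint. -/
def rankLT (N : ℕ) (f g : Lin N) : Prop :=
  startOf N f < startOf N g ∨
  (startOf N f = startOf N g ∧ (f (startOf N f)).min < (g (startOf N g)).min)

def rankLE (N : ℕ) (f g : Lin N) : Prop := f = g ∨ rankLT N f g

/-- `f` is the first lineage of `x` in the ranking order. -/
def isFirst (N : ℕ) (x : Set (Lin N)) (f : Lin N) : Prop := ∀ g ∈ x, rankLE N f g

open Classical

/-- `b_i(x)`: for the first lineage, `inf{v : f(v) ≠ {1,…,N}}`; otherwise the
left endpoint of the support. -/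
noncomputable def bOf (N : ℕ) (x : Set (Lin N)) (f : Lin N) : ℝ :=
  if isFirst N x f then sInf {v | v ∈ Set.Ico (0:ℝ) 1 ∧ f v ≠ Finset.univ}
  else startOf N f

/-- `e_i(x)`: the right endpoint of the ancestral material of `f`, capped at 1. -/
noncomputable def eOf (N : ℕ) (f : Lin N) : ℝ :=
  min (sInf {u : ℝ | ∀ s, u < s → s < 1 → f s = ∅}) 1

open Classical

/-- The q-pair kernel `q(x,A)` of the coalescent-with-recombination process. -/
noncomputable def qker (N : ℕ) (ρ : ℝ) (p : ℝ → ℝ) (x : Set (Lin N))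
    (A : Set (Set (Lin N))) : ℝ :=
  if hx : x.Finite ∧ 2 ≤ x.ncard then
    (1/2) * ∑ f ∈ hx.1.toFinset, ∑ g ∈ hx.1.toFinset,
      (if f ≠ g ∧ coal N x f g ∈ A then (1:ℝ) else 0)
    + (ρ/2) * ∑ f ∈ hx.1.toFinset,
        ∫ s in Set.Ioo (bOf N x f) (eOf N f),
          (if recomb N x f s ∈ A then p s else 0)
  else 0

/-- The lineage carrying `{1,…,N}` on all of `[0,1)`. -/
noncomputable def fullLin (N : ℕ) : Lin N := fun s => if s ∈ Set.Ico (0:ℝ) 1 then Finset.univ else ∅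

/-- The absorbing state `Δ`. -/
def Δstate (N : ℕ) : Set (Lin N) := {fullLin N}

/-- The initial state `ϖ` of `N` singleton lineages. -/
def varpi (N : ℕ) : Set (Lin N) :=
  {f | ∃ j : Fin N, f = fun s => if s ∈ Set.Ico (0:ℝ) 1 then {j} else ∅}

/-- One-step reachability: `y ∈ E_x`, i.e. `y` arises from `x` by one coalescence
or one admissible recombination. -/
def EStep (N : ℕ) (x y : Set (Lin N)) : Prop :=
  (∃ f ∈ x, ∃ g ∈ x, f ≠ g ∧ y = coal N x f g) ∨
  (∃ f ∈ x, ∃ u, bOf N x f < u ∧ u < eOf N f ∧ y = recomb N x f u)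

/-- `y` arises from `x` by a recombination with breakpoint `u`. -/
def RecombStep (N : ℕ) (x y : Set (Lin N)) (u : ℝ) : Prop :=
  ∃ f ∈ x, bOf N x f < u ∧ u < eOf N f ∧ y = recomb N x f u

/-- Membership in the ARG space `G`: right-continuous piecewise-constant `E`-valued
paths with finitely many jumps, starting at `ϖ`, each jump a coalescence or
recombination of the previous state, and no recombination breakpoint repeated. -/
def InG (N : ℕ) (g : ℝ → Set (Lin N)) : Prop :=
  ∃ (n : ℕ) (τ : ℕ → ℝ) (st : ℕ → Set (Lin N)),
    τ 0 = 0 ∧ (∀ i < n, τ i < τ (i+1)) ∧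
    st 0 = varpi N ∧
    (∀ i < n, EStep N (st i) (st (i+1))) ∧
    (∀ i < n, ∀ t, τ i ≤ t → t < τ (i+1) → g t = st i) ∧
    (∀ t, τ n ≤ t → g t = st n) ∧
    (∀ i < n, ∀ j < n, i ≠ j → ∀ u v, RecombStep N (st i) (st (i+1)) u →
      RecombStep N (st j) (st (j+1)) v → u ≠ v)

/-- All breakpoints appearing along a path. -/
def BpG (N : ℕ) (g : ℝ → Set (Lin N)) : Set ℝ := {s | ∃ t, 0 ≤ t ∧ s ∈ Bp N (g t)}

/-- A tuple of lineages ranked in the canonical order. -/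
def Ranked (N : ℕ) (k : ℕ) (f : ℕ → Lin N) : Prop :=
  ∀ i j, i < j → j < k → rankLT N (f i) (f j)

end CWR

namespace CWR

lemma memS_constOn {N : ℕ} {f : Lin N} (hf : MemS N f) {c d : ℝ}
    (hc : 0 ≤ c) (hd : d ≤ 1)
    (hcont : ∀ s ∈ Set.Ioo c d, ContAt N f s) :
    ∀ u ∈ Set.Ico c d, f u = f c := by
  have key : ∀ t ∈ Set.Ioo c d, ∀ v ∈ Set.Ico c t, f v = f c := by
    rintro t ⟨hct, htd⟩ v hv
    set A : Set ℝ := {r | r ∈ Set.Icc c t ∧ ∀ w ∈ Set.Ico c r, f w = f c} with hA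
    have hcA : c ∈ A := ⟨⟨le_refl c, le_of_lt hct⟩,
      by rintro w ⟨h1, h2⟩; exact absurd (lt_of_le_of_lt h1 h2) (lt_irrefl _)⟩
    have hAne : A.Nonempty := ⟨c, hcA⟩
    have hAbdd : BddAbove A := ⟨t, fun r hr => hr.1.2⟩
    set T := sSup A with hT
    have hcT : c ≤ T := le_csSup hAbdd hcA
    have hTt : T ≤ t := csSup_le hAne (fun r hr => hr.1.2)
    have step1 : ∀ w ∈ Set.Ico c T, f w = f c := by
      rintro w ⟨h1, h2⟩
      obtain ⟨r, hrA, hwr⟩ := exists_lt_of_lt_csSup hAne h2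
      exact hrA.2 w ⟨h1, hwr⟩
    have step2 : f T = f c := by
      rcases eq_or_lt_of_le hcT with h | h
      · rw [← h]
      · have hTIoo : T ∈ Set.Ioo c d := ⟨h, lt_of_le_of_lt hTt htd⟩
        obtain ⟨δ, hδ, hδc⟩ := hcont T hTIoo
        have hv : max c (T - δ/2) ∈ Set.Ico c T :=
          ⟨le_max_left _ _, max_lt h (by linarith)⟩
        have h1 : f (max c (T - δ/2)) = f c := step1 _ hv
        have h2 : f (max c (T - δ/2)) = f T := by
          apply hδc
          refine ⟨?_, lt_of_lt_of_le hv.2 (by linarith)⟩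
          have : T - δ/2 > T - δ := by linarith
          exact lt_of_lt_of_le this (le_max_right _ _)
        rw [← h1, h2]
    have step3 : T = t := by
      by_contra hne
      have hTlt : T < t := lt_of_le_of_ne hTt hne
      have hT01 : T ∈ Set.Ico (0:ℝ) 1 :=
        ⟨le_trans hc hcT, lt_of_le_of_lt hTt (lt_of_lt_of_le htd hd)⟩
      obtain ⟨δ, hδ, hδc⟩ := hf.1 T hT01
      set t' := min t (T + δ/2) with ht'
      have ht'T : T < t' := lt_min hTlt (by linarith)
      have ht'A : t' ∈ A := by
        refine ⟨⟨le_trans hcT (le_of_lt ht'T), min_le_left _ _⟩, ?_⟩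
        rintro w ⟨h1, h2⟩
        rcases lt_or_ge w T with hw | hw
        · exact step1 w ⟨h1, hw⟩
        · have : f w = f T := hδc w ⟨hw, lt_of_lt_of_le (lt_of_lt_of_le h2 (min_le_right _ _)) (by linarith)⟩
          rw [this, step2]
      exact absurd (le_csSup hAbdd ht'A) (not_le.mpr ht'T)
    exact step1 v (by rw [step3]; exact hv)
  rintro u ⟨hcu, hud⟩
  rcases eq_or_lt_of_le hcu with rfl | hcu
  · rfl
  obtain ⟨δ, hδ, hδc⟩ := hcont u ⟨hcu, hud⟩
  have hv : max c (u - δ/2) ∈ Set.Ico c u := ⟨le_max_left _ _, max_lt hcu (by linarith)⟩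
  have h1 : f (max c (u - δ/2)) = f c := key u ⟨hcu, hud⟩ _ hv
  have h2 : f (max c (u - δ/2)) = f u := by
    apply hδc
    refine ⟨?_, lt_of_lt_of_le hv.2 (by linarith)⟩
    exact lt_of_lt_of_le (by linarith : u - δ < u - δ/2) (le_max_right c (u - δ/2))
  rw [← h1, h2]

lemma memS_endpoint {N : ℕ} {f : Lin N} (hf : MemS N f) {c d : ℝ}
    (hc : 0 ≤ c) (hcd : c < d) (hd : d < 1)
    (hcont : ∀ s ∈ Set.Ioc c d, ContAt N f s) : f d = f c := by
  have hconst := memS_constOn hf hc (le_of_lt hd)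
    (fun s hs => hcont s ⟨hs.1, le_of_lt hs.2⟩)
  obtain ⟨δ, hδ, hδc⟩ := hcont d ⟨hcd, le_refl d⟩
  have hv : max c (d - δ/2) ∈ Set.Ico c d := ⟨le_max_left _ _, max_lt hcd (by linarith)⟩
  have h1 : f (max c (d - δ/2)) = f c := hconst _ hv
  have h2 : f (max c (d - δ/2)) = f d := by
    apply hδc
    exact ⟨lt_of_lt_of_le (by linarith : d - δ < d - δ/2) (le_max_right _ _),
      lt_of_lt_of_le hv.2 (by linarith)⟩
  rw [← h2, h1]

lemma memS_measurableSet_eq {N : ℕ} {f : Lin N} (hf : MemS N f) (A : Finset (Fin N)) :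
    MeasurableSet {s | f s = A} := by
  classical
  set D := {s ∈ Set.Ioo (0:ℝ) 1 | ¬ ContAt N f s} with hDdef
  have hD : D.Finite := hf.2.1
  set S := {s | f s = A} with hS
  have hdecomp : S = (S ∩ (Set.Ioo 0 1 \ D)) ∪ (S ∩ D) ∪
      ((S ∩ {0}) ∪ (S ∩ ((Set.Ioo (0:ℝ) 1)ᶜ \ {0}))) := by
    ext s
    by_cases h1 : s ∈ Set.Ioo (0:ℝ) 1 <;> by_cases h2 : s ∈ D <;> by_cases h3 : s = (0:ℝ) <;>
      simp [Set.mem_inter_iff, h1, h2, h3] <;> tauto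
  rw [hdecomp]
  apply MeasurableSet.union
  apply MeasurableSet.union
  · -- open part
    apply IsOpen.measurableSet
    rw [Metric.isOpen_iff]
    rintro s ⟨hsS, hsO⟩
    have hopen : IsOpen (Set.Ioo (0:ℝ) 1 \ D) := (isOpen_Ioo).sdiff hD.isClosed
    obtain ⟨δ2, hδ2, hball2⟩ := Metric.isOpen_iff.mp hopen s hsO
    have hcont : ContAt N f s := by
      by_contra hcn
      exact hsO.2 ⟨hsO.1, hcn⟩
    obtain ⟨δ1, hδ1, hc⟩ := hcont
    refine ⟨min δ1 δ2, lt_min hδ1 hδ2, ?_⟩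
    intro u hu
    rw [Metric.mem_ball, Real.dist_eq] at hu
    have hu1 : |u - s| < δ1 := lt_of_lt_of_le hu (min_le_left _ _)
    have hu2 : u ∈ Metric.ball s δ2 := by
      rw [Metric.mem_ball, Real.dist_eq]; exact lt_of_lt_of_le hu (min_le_right _ _)
    rw [abs_lt] at hu1
    refine ⟨?_, hball2 hu2⟩
    have : f u = f s := hc u ⟨by linarith [hu1.1], by linarith [hu1.2]⟩
    rw [Set.mem_setOf_eq, this]; exact hsS
  · exact (hD.subset (Set.inter_subset_right)).measurableSet
  apply MeasurableSet.union
  · exact (Set.Finite.subset (Set.finite_singleton 0) Set.inter_subset_right).measurableSet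
  · have hsub : ∀ s ∈ (Set.Ioo (0:ℝ) 1)ᶜ \ {0}, f s = ∅ := by
      rintro s ⟨hs1, hs2⟩
      apply hf.2.2
      rintro ⟨h0, h1⟩
      rcases eq_or_lt_of_le h0 with h | h
      · exact hs2 h.symm
      · exact hs1 ⟨h, h1⟩
    by_cases hA : A = ∅
    · have : S ∩ ((Set.Ioo (0:ℝ) 1)ᶜ \ {0}) = (Set.Ioo (0:ℝ) 1)ᶜ \ {0} := by
        apply Set.inter_eq_self_of_subset_right
        intro s hs
        rw [Set.mem_setOf_eq, hsub s hs, hA]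
      rw [this]
      exact (measurableSet_Ioo.compl).diff (measurableSet_singleton 0)
    · have : S ∩ ((Set.Ioo (0:ℝ) 1)ᶜ \ {0}) = ∅ := by
        ext s
        simp only [Set.mem_inter_iff, Set.mem_empty_iff_false, iff_false, not_and]
        intro hsS hs
        exact hA (by rw [← hsS, hsub s hs])
      rw [this]; exact MeasurableSet.empty

lemma dp_measurableSet_eq {N : ℕ} {f g : Lin N} (hf : MemS N f) (hg : MemS N g) :
    MeasurableSet {s | f s = g s} := by
  classical
  have : {s | f s = g s} = ⋃ A ∈ (Finset.univ : Finset (Finset (Fin N))),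
      ({s | f s = A} ∩ {s | g s = A}) := by
    ext s
    constructor
    · intro hfg
      exact Set.mem_biUnion (Finset.mem_univ (f s)) ⟨rfl, hfg.symm⟩
    · intro hs
      rw [Set.mem_iUnion₂] at hs
      obtain ⟨A, -, h1, h2⟩ := hs
      exact (h1 : f s = A).trans (h2 : g s = A).symm
  rw [this]
  exact MeasurableSet.biUnion (Set.to_countable _)
    (fun A _ => (memS_measurableSet_eq hf A).inter (memS_measurableSet_eq hg A))

lemma dp_measurable {N : ℕ} {f g : Lin N} (hf : MemS N f) (hg : MemS N g) :
    Measurable (fun s => dp N (f s) (g s)) := by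
  simp only [dp]
  exact Measurable.ite (dp_measurableSet_eq hf hg) measurable_const measurable_const

lemma dp_nonneg {N : ℕ} (A B : Finset (Fin N)) : 0 ≤ dp N A B := by
  unfold dp; split <;> norm_num

lemma dp_le_one {N : ℕ} (A B : Finset (Fin N)) : dp N A B ≤ 1 := by
  unfold dp; split <;> norm_num

lemma dp_integrableOn {N : ℕ} {f g : Lin N} (hf : MemS N f) (hg : MemS N g) :
    IntegrableOn (fun s => dp N (f s) (g s)) (Set.Ioo (0:ℝ) 1) := by
  apply Integrable.mono' (integrable_const (1:ℝ))
  · exact ((dp_measurable hf hg).aestronglyMeasurable)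
  · filter_upwards with s
    rw [Real.norm_eq_abs, abs_of_nonneg (dp_nonneg _ _)]
    exact dp_le_one _ _

lemma dL_nonneg {N : ℕ} (f g : Lin N) : 0 ≤ dL N f g :=
  integral_nonneg (fun s => dp_nonneg _ _)

lemma dp_comm {N : ℕ} (A B : Finset (Fin N)) : dp N A B = dp N B A := by
  unfold dp
  by_cases h : A = B <;> simp [h, Ne.symm, eq_comm]

lemma dL_comm {N : ℕ} (f g : Lin N) : dL N f g = dL N g f := by
  unfold dL
  congr 1
  ext s
  exact dp_comm _ _

lemma dL_triangle {N : ℕ} {f g h : Lin N} (hf : MemS N f) (hg : MemS N g) (hh : MemS N h) :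
    dL N f h ≤ dL N f g + dL N g h := by
  unfold dL
  rw [← integral_add (dp_integrableOn hf hg) (dp_integrableOn hg hh)]
  apply integral_mono (dp_integrableOn hf hh)
    ((dp_integrableOn hf hg).add (dp_integrableOn hg hh))
  intro s
  simp only [Pi.add_apply]
  unfold dp
  rcases eq_or_ne (f s) (h s) with h1 | h1
  · rw [if_pos h1]
    have a1 : (0:ℝ) ≤ if f s = g s then (0:ℝ) else 1 := by split <;> norm_num
    have a2 : (0:ℝ) ≤ if g s = h s then (0:ℝ) else 1 := by split <;> norm_num
    linarith
  · rw [if_neg h1]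
    rcases eq_or_ne (f s) (g s) with h2 | h2
    · rw [if_pos h2, if_neg (fun h3 => h1 (h2.trans h3))]; norm_num
    · rw [if_neg h2]
      have a2 : (0:ℝ) ≤ if g s = h s then (0:ℝ) else 1 := by split <;> norm_num
      linarith

lemma le_dL {N : ℕ} {f g : Lin N} (hf : MemS N f) (hg : MemS N g) {p q : ℝ}
    (h0 : 0 ≤ p) (h1 : q ≤ 1) (hne : ∀ s ∈ Set.Ioo p q, f s ≠ g s) :
    q - p ≤ dL N f g := by
  rcases le_or_gt q p with h | h
  · linarith [dL_nonneg f g]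
  have hsub : Set.Ioo p q ⊆ Set.Ioo (0:ℝ) 1 :=
    Set.Ioo_subset_Ioo (by linarith) (by linarith)
  have step1 : ∫ s in Set.Ioo p q, dp N (f s) (g s) ≤ dL N f g := by
    unfold dL
    apply setIntegral_mono_set (dp_integrableOn hf hg)
    · filter_upwards with s using dp_nonneg _ _
    · exact Filter.Eventually.of_forall hsub
  have step2 : ∫ s in Set.Ioo p q, dp N (f s) (g s) = q - p := by
    rw [setIntegral_congr_fun measurableSet_Ioo (g := fun _ => (1:ℝ))
      (fun s hs => by unfold dp; rw [if_neg (hne s hs)])]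
    simp [Real.volume_Ioo, ENNReal.toReal_ofReal (by linarith : (0:ℝ) ≤ q - p), le_of_lt h]
  linarith

lemma rankLT_asymm {N : ℕ} {u v : Lin N} (h1 : rankLT N u v) (h2 : rankLT N v u) : False := by
  rcases h1 with h1 | ⟨e1, m1⟩ <;> rcases h2 with h2 | ⟨e2, m2⟩
  · exact absurd h1 (not_lt.mpr (le_of_lt h2))
  · rw [e2] at h1; exact lt_irrefl _ h1
  · rw [e1] at h2; exact lt_irrefl _ h2
  · exact absurd m1 (not_lt.mpr (le_of_lt m2))

lemma rankLT_irrefl {N : ℕ} {u : Lin N} (h : rankLT N u u) : False := by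
  rcases h with h | ⟨-, m⟩
  · exact lt_irrefl _ h
  · exact lt_irrefl _ m

/-- a state `y` within distance `ε ≤ d₀(x)/3` of `x` has breakpoints
`b₁ < ⋯ < b_m` with `|b_i − a_i| < ε`, and each `h_j = Σ f_j(a_i) 1_{[b_i,b_{i+1})}`. -/
theorem nearby_state_structure (N : ℕ) (k m : ℕ) (f h : ℕ → Lin N)
    (x y : Set (Lin N)) (hx : IsState N x) (hy : IsState N y)
    (hxf : x = {g | ∃ i, i < k ∧ g = f i})
    (hfinj : ∀ i, i < k → ∀ j, j < k → f i = f j → i = j)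
    (hyh : y = {g | ∃ i, i < k ∧ g = h i})
    (hhinj : ∀ i, i < k → ∀ j, j < k → h i = h j → i = j)
    (hrf : Ranked N k f) (hrh : Ranked N k h)
    (a : ℕ → ℝ) (ha0 : a 0 = 0) (ha1 : a (m+1) = 1)
    (hamono : ∀ i ≤ m, a i < a (i+1))
    (hbpx : Bp N x = {s | ∃ i, 1 ≤ i ∧ i ≤ m ∧ s = a i})
    (ε : ℝ) (hε0 : 0 < ε) (hε : ε ≤ d0 N x / 3) (hd : dE N y x < ε) :
    nBp N y = m ∧
    ∃ b : ℕ → ℝ, b 0 = 0 ∧ b (m+1) = 1 ∧ (∀ i ≤ m, b i < b (i+1)) ∧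
      Bp N y = {s | ∃ i, 1 ≤ i ∧ i ≤ m ∧ s = b i} ∧
      (∀ i, 1 ≤ i → i ≤ m → |b i - a i| < ε) ∧
      (∀ j, j < k → ∀ i ≤ m, ∀ u : ℝ, b i ≤ u → u < b (i+1) →
        h j u = f j (a i)) := by
  classical
  -- degenerate case N = 0
  by_cases hN : N = 0
  · subst hN
    have hxe : x = ∅ := by
      ext g
      simp only [Set.mem_empty_iff_false, iff_false]
      intro hg
      obtain ⟨s, -, hs⟩ := hx.2.2.1 g hg
      exact hs (Finset.eq_empty_of_isEmpty _)
    have hye : y = ∅ := by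
      ext g
      simp only [Set.mem_empty_iff_false, iff_false]
      intro hg
      obtain ⟨s, -, hs⟩ := hy.2.2.1 g hg
      exact hs (Finset.eq_empty_of_isEmpty _)
    have hk : k = 0 := by
      by_contra hk
      have : f 0 ∈ x := hxf ▸ ⟨0, Nat.pos_of_ne_zero hk, rfl⟩
      rw [hxe] at this
      exact this
    have hbx : Bp 0 x = ∅ := by
      rw [hxe]
      ext s
      simp [Bp]
    have hm : m = 0 := by
      by_contra hm
      have : a 1 ∈ Bp 0 x := by
        rw [hbpx]; exact ⟨1, le_refl 1, Nat.pos_of_ne_zero hm, rfl⟩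
      rw [hbx] at this
      exact this
    have hby : Bp 0 y = ∅ := by
      rw [hye]; ext s; simp [Bp]
    subst hm hk
    refine ⟨by rw [nBp, hby]; simp, fun i => if i = 0 then 0 else 1, by norm_num, by norm_num,
      ?_, ?_, by omega, by omega⟩
    · intro i hi
      interval_cases i
      norm_num
    · rw [hby]
      ext s
      simp only [Set.mem_empty_iff_false, Set.mem_setOf_eq, false_iff, not_exists]
      intro i
      omega
  -- main case
  have hk1 : 1 ≤ k := by
    have h0 : (0:ℝ) ∈ Set.Ico (0:ℝ) 1 := ⟨le_refl 0, by norm_num⟩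
    obtain ⟨F, hF, -⟩ := (hx.2.2.2 0 h0).1 ⟨0, Nat.pos_of_ne_zero hN⟩
    rw [hxf] at hF
    obtain ⟨i, hi, rfl⟩ := hF
    omega
  have hfx : ∀ j, j < k → f j ∈ x := fun j hj => hxf ▸ ⟨j, hj, rfl⟩
  have hhy : ∀ j, j < k → h j ∈ y := fun j hj => hyh ▸ ⟨j, hj, rfl⟩
  have hmemf : ∀ j, j < k → MemS N (f j) := fun j hj => hx.2.1 _ (hfx j hj)
  have hmemh : ∀ j, j < k → MemS N (h j) := fun j hj => hy.2.1 _ (hhy j hj)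
  -- monotonicity of a
  have hmono : ∀ i j : ℕ, i < j → j ≤ m + 1 → a i < a j := by
    intro i j hij hj
    induction j with
    | zero => omega
    | succ j' ih =>
      rcases Nat.lt_or_ge i j' with hij' | hij'
      · exact lt_trans (ih hij' (by omega)) (hamono j' (by omega))
      · have : i = j' := by omega
        subst this
        exact hamono i (by omega)
  have hmonole : ∀ i j : ℕ, i ≤ j → j ≤ m + 1 → a i ≤ a j := by
    intro i j hij hj
    rcases eq_or_lt_of_le hij with rfl | hlt
    · exact le_refl _
    · exact le_of_lt (hmono i j hlt hj)
  have ha_nonneg : ∀ i, i ≤ m + 1 → 0 ≤ a i := fun i hi => ha0 ▸ hmonole 0 i (by omega) hi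
  have ha_le_one : ∀ i, i ≤ m + 1 → a i ≤ 1 := fun i hi => ha1 ▸ hmonole i (m+1) hi (le_refl _)
  -- gap bounds
  have hgapset : ∀ i, i ≤ m + 1 → a i ∈ insert (0:ℝ) (insert 1 (Bp N x)) := by
    intro i hi
    rcases Nat.eq_zero_or_pos i with rfl | hpos
    · exact Or.inl ha0
    rcases eq_or_lt_of_le hi with rfl | hlt
    · exact Or.inr (Or.inl ha1)
    · exact Or.inr (Or.inr (hbpx ▸ ⟨i, hpos, by omega, rfl⟩))
  have hd0le : ∀ i, i ≤ m → d0 N x ≤ a (i+1) - a i := by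
    intro i hi
    apply csInf_le
    · refine ⟨0, ?_⟩
      rintro t ⟨a', -, b', -, hab, rfl⟩
      linarith
    · exact ⟨a i, hgapset i (by omega), a (i+1), hgapset (i+1) (by omega), hamono i hi, rfl⟩
  have hgap : ∀ i, i ≤ m → 3 * ε ≤ a (i+1) - a i := by
    intro i hi
    have := hd0le i hi
    linarith
  have hd0_le_one : d0 N x ≤ 1 := by
    have : d0 N x ≤ 1 - 0 := by
      apply csInf_le
      · refine ⟨0, ?_⟩
        rintro t ⟨a', -, b', -, hab, rfl⟩
        linarith
      · exact ⟨0, Or.inl rfl, 1, Or.inr (Or.inl rfl), by norm_num, rfl⟩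
    linarith
  have hε13 : ε ≤ 1/3 := by linarith
  -- locate points in the partition by a
  have hlocate : ∀ s : ℝ, 0 ≤ s → s < 1 → ∃ i, i ≤ m ∧ a i ≤ s ∧ s < a (i+1) := by
    intro s hs0 hs1
    by_contra hcon
    push_neg at hcon
    have : ∀ i, i ≤ m + 1 → a i ≤ s := by
      intro i hi
      induction i with
      | zero => rw [ha0]; exact hs0
      | succ i' ih =>
        have h1 : a i' ≤ s := ih (by omega)
        exact hcon i' (by omega) h1
    have := this (m+1) (le_refl _)
    rw [ha1] at this
    linarith
  -- constancy of lineages of x on the a-partition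
  have hconstx : ∀ j, j < k → ∀ i, i ≤ m → ∀ u, a i ≤ u → u < a (i+1) → f j u = f j (a i) := by
    intro j hj i hi u hu1 hu2
    apply memS_constOn (hmemf j hj) (ha_nonneg i (by omega)) (ha_le_one (i+1) (by omega))
      _ u ⟨hu1, hu2⟩
    intro s hs
    by_contra hcn
    have hsbp : s ∈ Bp N x := ⟨⟨lt_of_le_of_lt (ha_nonneg i (by omega)) hs.1,
      lt_of_lt_of_le hs.2 (ha_le_one (i+1) (by omega))⟩, f j, hfx j hj, hcn⟩
    rw [hbpx] at hsbp
    obtain ⟨i', hi'1, hi'2, rfl⟩ := hsbp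
    rcases Nat.lt_or_ge i' (i+1) with hc | hc
    · have : a i' ≤ a i := hmonole i' i (by omega) (by omega)
      linarith [hs.1]
    · have : a (i+1) ≤ a i' := hmonole (i+1) i' hc (by omega)
      linarith [hs.2]
  -- decompose the distance bound
  have hxne : x.Nonempty := ⟨f 0, hfx 0 (by omega)⟩
  have hyne : y.Nonempty := ⟨h 0, hhy 0 (by omega)⟩
  have hS1bdd : BddAbove ((fun g => dLset N g x) '' y) := (hy.1.image _).bddAbove
  have hS2bdd : BddAbove ((fun g => dLset N g y) '' x) := (hx.1.image _).bddAbove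
  have hdLset_nonneg : ∀ (g : Lin N) (z : Set (Lin N)), z.Nonempty → 0 ≤ dLset N g z := by
    intro g z hz
    apply Real.sInf_nonneg
    rintro r ⟨w, -, rfl⟩
    exact dL_nonneg _ _
  have hmaxlt : max (sSup ((fun g => dLset N g x) '' y)) (sSup ((fun g => dLset N g y) '' x)) < ε := by
    have h2 : 0 ≤ |(y.ncard : ℝ) - (x.ncard : ℝ)| := abs_nonneg _
    have h3 : 0 ≤ |(nBp N y : ℝ) - (nBp N x : ℝ)| := abs_nonneg _
    unfold dE at hd
    linarith
  have hS1 : sSup ((fun g => dLset N g x) '' y) < ε := lt_of_le_of_lt (le_max_left _ _) hmaxlt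
  have hS2 : sSup ((fun g => dLset N g y) '' x) < ε := lt_of_le_of_lt (le_max_right _ _) hmaxlt
  have hclose1 : ∀ j, j < k → ∃ j', j' < k ∧ dL N (h j) (f j') < ε := by
    intro j hj
    have h1 : dLset N (h j) x < ε :=
      lt_of_le_of_lt (le_csSup hS1bdd ⟨h j, hhy j hj, rfl⟩) hS1
    obtain ⟨r, hr, hrε⟩ := exists_lt_of_csInf_lt (hxne.image _) h1
    obtain ⟨F, hF, rfl⟩ := hr
    rw [hxf] at hF
    obtain ⟨j', hj', rfl⟩ := hF
    exact ⟨j', hj', hrε⟩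
  have hclose2 : ∀ j, j < k → ∃ j', j' < k ∧ dL N (f j) (h j') < ε := by
    intro j hj
    have h1 : dLset N (f j) y < ε :=
      lt_of_le_of_lt (le_csSup hS2bdd ⟨f j, hfx j hj, rfl⟩) hS2
    obtain ⟨r, hr, hrε⟩ := exists_lt_of_csInf_lt (hyne.image _) h1
    obtain ⟨H, hH, rfl⟩ := hr
    rw [hyh] at hH
    obtain ⟨j', hj', rfl⟩ := hH
    exact ⟨j', hj', hrε⟩
  -- number of breakpoints of y
  have hnbpx : nBp N x = m := by
    unfold nBp
    rw [hbpx]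
    have himg : {s | ∃ i, 1 ≤ i ∧ i ≤ m ∧ s = a i} = a '' (Set.Icc 1 m) := by
      ext s
      simp only [Set.mem_setOf_eq, Set.mem_image, Set.mem_Icc]
      constructor
      · rintro ⟨i, h1, h2, rfl⟩; exact ⟨i, ⟨h1, h2⟩, rfl⟩
      · rintro ⟨i, ⟨h1, h2⟩, rfl⟩; exact ⟨i, h1, h2, rfl⟩
    rw [himg, Set.ncard_image_of_injOn, ← Finset.coe_Icc, Set.ncard_coe_finset, Nat.card_Icc]
    · omega
    · intro i hi j hj hij
      simp only [Set.mem_Icc] at hi hj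
      by_contra hne
      rcases Nat.lt_or_ge i j with hc | hc
      · exact absurd hij (ne_of_lt (hmono i j hc (by omega)))
      · exact absurd hij.symm (ne_of_lt (hmono j i (by omega) (by omega)))
  have hnbpy : nBp N y = m := by
    have h3 : |(nBp N y : ℝ) - (nBp N x : ℝ)| < ε := by
      have h0 : 0 ≤ max (sSup ((fun g => dLset N g x) '' y)) (sSup ((fun g => dLset N g y) '' x)) :=
        le_trans (hdLset_nonneg (h 0) x hxne) (le_trans (le_csSup hS1bdd ⟨h 0, hhy 0 (by omega), rfl⟩) (le_max_left _ _))
      have h2 : 0 ≤ |(y.ncard : ℝ) - (x.ncard : ℝ)| := abs_nonneg _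
      unfold dE at hd
      linarith
    rw [hnbpx] at h3
    rw [abs_lt] at h3
    have hεlt1 : ε < 1 := by linarith
    have c1 : (nBp N y : ℝ) < m + 1 := by linarith
    have c2 : (m : ℝ) - 1 < nBp N y := by linarith
    have d1 : nBp N y < m + 1 := by exact_mod_cast c1
    have d2 : m < nBp N y + 1 := by
      have : (m : ℝ) < nBp N y + 1 := by linarith
      exact_mod_cast this
    omega
  -- Bp y is finite
  have hBpyfin : (Bp N y).Finite := by
    apply Set.Finite.subset (Set.Finite.biUnion (Set.finite_Iio k)
      (fun j (hj : j ∈ Set.Iio k) => (hmemh j hj).2.1))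
    rintro s ⟨hs1, H, hH, hs2⟩
    rw [hyh] at hH
    obtain ⟨j, hj, rfl⟩ := hH
    exact Set.mem_biUnion (Set.mem_Iio.mpr hj) ⟨hs1, hs2⟩
  -- agreement on long intervals
  have hagree : ∀ (F H : Lin N), MemS N F → MemS N H → dL N F H < ε →
      ∀ p q : ℝ, 0 ≤ p → q ≤ 1 → ε ≤ q - p → ∃ u ∈ Set.Ioo p q, F u = H u := by
    intro F H hF hH hFH p q hp hq hpq
    by_contra hcon
    push_neg at hcon
    have := le_dL hF hH hp hq hcon
    linarith
  -- each window around a breakpoint of x contains a breakpoint of y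
  have hwindow : ∀ i, 1 ≤ i → i ≤ m → ∃ t ∈ Bp N y, a i - ε < t ∧ t < a i + ε := by
    intro i hi1 hi2
    have haibp : a i ∈ Bp N x := hbpx ▸ ⟨i, hi1, hi2, rfl⟩
    obtain ⟨-, F, hF, hFcn⟩ := haibp
    rw [hxf] at hF
    obtain ⟨j0, hj0, rfl⟩ := hF
    -- values left and right of a i
    have hgapL := hgap (i-1) (by omega)
    have hgapR := hgap i hi2
    have him1 : i - 1 + 1 = i := by omega
    rw [him1] at hgapL
    have haim1 : 0 ≤ a (i-1) := ha_nonneg (i-1) (by omega)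
    have hai1 : a (i+1) ≤ 1 := ha_le_one (i+1) (by omega)
    set cL := f j0 (a (i-1)) with hcL
    set cR := f j0 (a i) with hcR
    have hvalL : ∀ u, a (i-1) ≤ u → u < a i → f j0 u = cL := by
      intro u h1 h2
      have := hconstx j0 hj0 (i-1) (by omega) u h1 (by rw [him1]; exact h2)
      rw [this]
    have hvalR : ∀ u, a i ≤ u → u < a (i+1) → f j0 u = cR :=
      fun u h1 h2 => hconstx j0 hj0 i hi2 u h1 h2
    have hLR : cL ≠ cR := by
      intro hLR
      apply hFcn
      refine ⟨min (a i - a (i-1)) (a (i+1) - a i), by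
        apply lt_min <;> linarith, ?_⟩
      intro u hu
      rcases lt_or_ge u (a i) with hc | hc
      · rw [hvalL u (by
          have := min_le_left (a i - a (i-1)) (a (i+1) - a i)
          have := hu.1
          linarith) hc, hLR, hcR]
      · rw [hvalR u hc (by
          have := min_le_right (a i - a (i-1)) (a (i+1) - a i)
          have := hu.2
          linarith), hcR]
    -- matched lineage in y
    obtain ⟨j', hj', hdLj'⟩ := hclose2 j0 hj0
    set H := h j' with hH
    obtain ⟨u1, hu1, hu1eq⟩ := hagree (f j0) H (hmemf j0 hj0) (hmemh j' hj') hdLj'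
      (a i - ε) (a i) (by linarith) (ha_le_one i (by omega)) (by linarith)
    obtain ⟨u2, hu2, hu2eq⟩ := hagree (f j0) H (hmemf j0 hj0) (hmemh j' hj') hdLj'
      (a i) (a i + ε) (ha_nonneg i (by omega)) (by linarith) (by linarith)
    have hHu1 : H u1 = cL := by
      rw [← hu1eq]
      exact hvalL u1 (by linarith [hu1.1]) hu1.2
    have hHu2 : H u2 = cR := by
      rw [← hu2eq]
      exact hvalR u2 (le_of_lt hu2.1) (by linarith [hu2.2])
    have hne : H u1 ≠ H u2 := by rw [hHu1, hHu2]; exact hLR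
    have hdisc : ∃ t ∈ Set.Ioc u1 u2, ¬ ContAt N H t := by
      by_contra hcon
      push_neg at hcon
      exact hne (memS_endpoint (hmemh j' hj') (by linarith [hu1.1]) (lt_trans hu1.2 hu2.1)
        (by linarith [hu2.2]) hcon).symm
    obtain ⟨t, ht, htcn⟩ := hdisc
    refine ⟨t, ⟨⟨by linarith [ht.1, hu1.1], ?_⟩, H, hhy j' hj', htcn⟩, by linarith [ht.1, hu1.1], by linarith [ht.2, hu2.2]⟩
    have : t ≤ u2 := ht.2
    have : u2 < a i + ε := hu2.2
    linarith
  -- choose breakpoints of y in the windows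
  have hwindow' : ∀ i : ℕ, ∃ t : ℝ, (1 ≤ i ∧ i ≤ m) →
      (t ∈ Bp N y ∧ a i - ε < t ∧ t < a i + ε) := by
    intro i
    by_cases hi : 1 ≤ i ∧ i ≤ m
    · obtain ⟨t, h1, h2, h3⟩ := hwindow i hi.1 hi.2
      exact ⟨t, fun _ => ⟨h1, h2, h3⟩⟩
    · exact ⟨0, fun hc => absurd hc hi⟩
  choose β hβ using hwindow'
  have hβmono : ∀ i i', 1 ≤ i → i < i' → i' ≤ m → β i < β i' := by
    intro i i' h1 h2 h3
    obtain ⟨-, -, hi2⟩ := hβ i ⟨h1, by omega⟩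
    obtain ⟨-, hi'1, -⟩ := hβ i' ⟨by omega, h3⟩
    have hstep : a i + ε ≤ a i' - ε := by
      have h4 : a (i+1) ≤ a i' := hmonole (i+1) i' (by omega) (by omega)
      have := hgap i (by omega)
      linarith
    linarith
  -- pigeonhole: these are all the breakpoints of y
  have hcard : hBpyfin.toFinset.card = m := by
    have := hnbpy
    unfold nBp at this
    rwa [Set.ncard_eq_toFinset_card _ hBpyfin] at this
  have hBpy : Bp N y = {s | ∃ i, 1 ≤ i ∧ i ≤ m ∧ s = β i} := by
    set J : Finset ℝ := (Finset.Icc 1 m).image β with hJ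
    have hJsub : J ⊆ hBpyfin.toFinset := by
      intro t ht
      rw [hJ, Finset.mem_image] at ht
      obtain ⟨i, hi, rfl⟩ := ht
      rw [Finset.mem_Icc] at hi
      exact (Set.Finite.mem_toFinset _).mpr (hβ i hi).1
    have hJcard : J.card = m := by
      rw [hJ, Finset.card_image_of_injOn, Nat.card_Icc]
      · omega
      · intro i hi i' hi' hii'
        simp only [Finset.coe_Icc, Set.mem_Icc] at hi hi'
        by_contra hne
        rcases Nat.lt_or_ge i i' with hc | hc
        · exact absurd hii' (ne_of_lt (hβmono i i' hi.1 hc hi'.2))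
        · exact absurd hii'.symm (ne_of_lt (hβmono i' i hi'.1 (by omega) hi.2))
    have hJeq : J = hBpyfin.toFinset := Finset.eq_of_subset_of_card_le hJsub (by omega)
    ext t
    constructor
    · intro ht
      have : t ∈ J := hJeq ▸ (Set.Finite.mem_toFinset _).mpr ht
      rw [hJ, Finset.mem_image] at this
      obtain ⟨i, hi, rfl⟩ := this
      rw [Finset.mem_Icc] at hi
      exact ⟨i, hi.1, hi.2, rfl⟩
    · rintro ⟨i, h1, h2, rfl⟩
      exact (hβ i ⟨h1, h2⟩).1
  -- define b
  set b : ℕ → ℝ := fun i => if i = 0 then 0 else if i ≤ m then β i else 1 with hbdef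
  have hb0 : b 0 = 0 := by simp [hbdef]
  have hb1 : b (m+1) = 1 := by simp [hbdef]
  have hbval : ∀ i, 1 ≤ i → i ≤ m → b i = β i := by
    intro i h1 h2
    have hi0 : i ≠ 0 := by omega
    rw [hbdef]
    simp only [if_neg hi0, if_pos h2]
  have hbwin : ∀ i, 1 ≤ i → i ≤ m → a i - ε < b i ∧ b i < a i + ε := by
    intro i h1 h2
    rw [hbval i h1 h2]
    exact ⟨(hβ i ⟨h1, h2⟩).2.1, (hβ i ⟨h1, h2⟩).2.2⟩
  have hbmono : ∀ i j : ℕ, i < j → j ≤ m + 1 → b i < b j := by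
    intro i j hij hj
    rcases Nat.eq_zero_or_pos i with rfl | hi0
    · rw [hb0]
      rcases eq_or_lt_of_le hj with rfl | hjlt
      · rw [hb1]; norm_num
      · have hw := hbwin j (by omega) (by omega)
        have : 3 * ε ≤ a 1 - a 0 := hgap 0 (by omega)
        have hj1 : a 1 ≤ a j := hmonole 1 j (by omega) (by omega)
        rw [ha0] at this
        linarith [hw.1]
    rcases eq_or_lt_of_le hj with rfl | hjlt
    · rw [hb1]
      have hw := hbwin i hi0 (by omega)
      have hgi := hgap i (by omega)
      have hi1 : a (i+1) ≤ 1 := ha_le_one (i+1) (by omega)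
      linarith [hw.2]
    · have hw1 := hbwin i hi0 (by omega)
      have hw2 := hbwin j (by omega) (by omega)
      have hstep : a i + ε ≤ a j - ε := by
        have h4 : a (i+1) ≤ a j := hmonole (i+1) j (by omega) (by omega)
        have := hgap i (by omega)
        linarith
      linarith [hw1.2, hw2.1]
  have hbmonole : ∀ i j : ℕ, i ≤ j → j ≤ m + 1 → b i ≤ b j := by
    intro i j hij hj
    rcases eq_or_lt_of_le hij with rfl | hlt
    · exact le_refl _
    · exact le_of_lt (hbmono i j hlt hj)
  have hb_nonneg : ∀ i, i ≤ m + 1 → 0 ≤ b i := fun i hi => hb0 ▸ hbmonole 0 i (by omega) hi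
  have hb_le_one : ∀ i, i ≤ m + 1 → b i ≤ 1 := fun i hi => hb1 ▸ hbmonole i (m+1) hi (le_refl _)
  have hBpyb : Bp N y = {s | ∃ i, 1 ≤ i ∧ i ≤ m ∧ s = b i} := by
    rw [hBpy]
    ext t
    constructor
    · rintro ⟨i, h1, h2, rfl⟩
      exact ⟨i, h1, h2, (hbval i h1 h2).symm⟩
    · rintro ⟨i, h1, h2, rfl⟩
      exact ⟨i, h1, h2, hbval i h1 h2⟩
  -- constancy of lineages of y on the b-partition
  have hconsty : ∀ j, j < k → ∀ i, i ≤ m → ∀ u, b i ≤ u → u < b (i+1) → h j u = h j (b i) := by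
    intro j hj i hi u hu1 hu2
    apply memS_constOn (hmemh j hj) (hb_nonneg i (by omega)) (hb_le_one (i+1) (by omega))
      _ u ⟨hu1, hu2⟩
    intro s hs
    by_contra hcn
    have hsbp : s ∈ Bp N y := ⟨⟨lt_of_le_of_lt (hb_nonneg i (by omega)) hs.1,
      lt_of_lt_of_le hs.2 (hb_le_one (i+1) (by omega))⟩, h j, hhy j hj, hcn⟩
    rw [hBpyb] at hsbp
    obtain ⟨i', hi'1, hi'2, rfl⟩ := hsbp
    rcases Nat.lt_or_ge i' (i+1) with hc | hc
    · have : b i' ≤ b i := hbmonole i' i (by omega) (by omega)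
      linarith [hs.1]
    · have : b (i+1) ≤ b i' := hbmonole (i+1) i' hc (by omega)
      linarith [hs.2]
  have hblocate : ∀ s : ℝ, 0 ≤ s → s < 1 → ∃ i, i ≤ m ∧ b i ≤ s ∧ s < b (i+1) := by
    intro s hs0 hs1
    by_contra hcon
    push_neg at hcon
    have : ∀ i, i ≤ m + 1 → b i ≤ s := by
      intro i hi
      induction i with
      | zero => rw [hb0]; exact hs0
      | succ i' ih => exact hcon i' (by omega) (ih (by omega))
    have := this (m+1) (le_refl _)
    rw [hb1] at this
    linarith
  -- matching
  have hclose1' : ∀ j : ℕ, ∃ j', j < k → (j' < k ∧ dL N (h j) (f j') < ε) := by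
    intro j
    by_cases hj : j < k
    · obtain ⟨j', h1, h2⟩ := hclose1 j hj
      exact ⟨j', fun _ => ⟨h1, h2⟩⟩
    · exact ⟨0, fun hc => absurd hc hj⟩
  choose M hM using hclose1'
  -- matched values agree across the partitions
  have hval : ∀ j, j < k → ∀ i, i ≤ m → ∀ u, b i ≤ u → u < b (i+1) →
      h j u = f (M j) (a i) := by
    intro j hj i hi u hu1 hu2
    obtain ⟨hMk, hMd⟩ := hM j hj
    have hgi := hgap i hi
    have hai1 : a (i+1) ≤ 1 := ha_le_one (i+1) (by omega)
    have hai0 : 0 ≤ a i := ha_nonneg i (by omega)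
    obtain ⟨u0, hu0, hu0eq⟩ := hagree (h j) (f (M j)) (hmemh j hj) (hmemf _ hMk)
      hMd (a i + ε) (a i + 2*ε) (by linarith) (by linarith) (by linarith)
    -- u0 is in [b i, b (i+1))
    have hbiu : b i ≤ u0 := by
      rcases Nat.eq_zero_or_pos i with rfl | hi0
      · rw [hb0]; linarith [hu0.1]
      · have := (hbwin i hi0 hi).2
        linarith [hu0.1]
    have hubi1 : u0 < b (i+1) := by
      rcases eq_or_lt_of_le (show i + 1 ≤ m + 1 by omega) with he | hlt
      · have : i = m := by omega
        subst this
        rw [hb1]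
        linarith [hu0.2]
      · have := (hbwin (i+1) (by omega) (by omega)).1
        have hgi1 := hgap (i+1) (by omega)
        linarith [hu0.2]
    have h1 : h j u = h j (b i) := hconsty j hj i hi u hu1 hu2
    have h2 : h j u0 = h j (b i) := hconsty j hj i hi u0 hbiu hubi1
    have h3 : f (M j) u0 = f (M j) (a i) := hconstx _ hMk i hi u0 (by linarith [hu0.1]) (by linarith [hu0.2])
    rw [h1, ← h2, hu0eq, h3]
  -- support analysis
  have hsupp : ∀ p, p < k → ∃ i, i ≤ m ∧ f p (a i) ≠ ∅ ∧ ∀ i', i' < i → f p (a i') = ∅ := by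
    intro p hp
    have hex : ∃ i, i ≤ m ∧ f p (a i) ≠ ∅ := by
      obtain ⟨s, hs, hsne⟩ := hx.2.2.1 (f p) (hfx p hp)
      obtain ⟨i, hi, h1, h2⟩ := hlocate s hs.1 hs.2
      refine ⟨i, hi, ?_⟩
      rw [← hconstx p hp i hi s h1 h2]
      exact hsne
    refine ⟨Nat.find hex, (Nat.find_spec hex).1, (Nat.find_spec hex).2, ?_⟩
    intro i' hi'
    have hfm := (Nat.find_spec hex).1
    have := Nat.find_min hex hi'
    by_contra hne
    exact this ⟨by omega, hne⟩
  have hstartf : ∀ p, p < k → ∀ i, i ≤ m → f p (a i) ≠ ∅ →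
      (∀ i', i' < i → f p (a i') = ∅) → startOf N (f p) = a i := by
    intro p hp i hi hne hmin
    unfold startOf
    apply IsLeast.csInf_eq
    constructor
    · exact ⟨⟨ha_nonneg i (by omega), ha1 ▸ hmono i (m+1) (by omega) (le_refl _)⟩, hne⟩
    · rintro s ⟨hs, hsne⟩
      obtain ⟨i', hi', h1, h2⟩ := hlocate s hs.1 hs.2
      have : f p s = f p (a i') := hconstx p hp i' hi' s h1 h2
      rw [this] at hsne
      have : i ≤ i' := by
        by_contra hc
        exact hsne (hmin i' (by omega))
      linarith [hmonole i i' this (by omega)]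
  have hstarth : ∀ j, j < k → ∀ i, i ≤ m → f (M j) (a i) ≠ ∅ →
      (∀ i', i' < i → f (M j) (a i') = ∅) → startOf N (h j) = b i := by
    intro j hj i hi hne hmin
    unfold startOf
    apply IsLeast.csInf_eq
    constructor
    · refine ⟨⟨hb_nonneg i (by omega), hb1 ▸ hbmono i (m+1) (by omega) (le_refl _)⟩, ?_⟩
      rw [hval j hj i hi (b i) (le_refl _) (hbmono i (i+1) (by omega) (by omega))]
      exact hne
    · rintro s ⟨hs, hsne⟩
      obtain ⟨i', hi', h1, h2⟩ := hblocate s hs.1 hs.2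
      have : h j s = f (M j) (a i') := hval j hj i' hi' s h1 h2
      rw [this] at hsne
      have : i ≤ i' := by
        by_contra hc
        exact hsne (hmin i' (by omega))
      linarith [hbmonole i i' this (by omega)]
  -- rank transfer
  have htrans : ∀ j1 j2, j1 < k → j2 < k → rankLT N (h j1) (h j2) →
      rankLT N (f (M j1)) (f (M j2)) := by
    intro j1 j2 hj1 hj2 hr
    obtain ⟨i1, hi1, hne1, hmin1⟩ := hsupp (M j1) (hM j1 hj1).1
    obtain ⟨i2, hi2, hne2, hmin2⟩ := hsupp (M j2) (hM j2 hj2).1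
    have hsf1 : startOf N (f (M j1)) = a i1 := hstartf _ (hM j1 hj1).1 i1 hi1 hne1 hmin1
    have hsf2 : startOf N (f (M j2)) = a i2 := hstartf _ (hM j2 hj2).1 i2 hi2 hne2 hmin2
    have hsh1 : startOf N (h j1) = b i1 := hstarth j1 hj1 i1 hi1 hne1 hmin1
    have hsh2 : startOf N (h j2) = b i2 := hstarth j2 hj2 i2 hi2 hne2 hmin2
    have hv1 : h j1 (startOf N (h j1)) = f (M j1) (startOf N (f (M j1))) := by
      rw [hsh1, hsf1]
      exact hval j1 hj1 i1 hi1 (b i1) (le_refl _) (hbmono i1 (i1+1) (by omega) (by omega))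
    have hv2 : h j2 (startOf N (h j2)) = f (M j2) (startOf N (f (M j2))) := by
      rw [hsh2, hsf2]
      exact hval j2 hj2 i2 hi2 (b i2) (le_refl _) (hbmono i2 (i2+1) (by omega) (by omega))
    rcases hr with hlt | ⟨heq, hmin⟩
    · left
      rw [hsh1, hsh2] at hlt
      have : i1 < i2 := by
        by_contra hc
        exact absurd hlt (not_lt.mpr (hbmonole i2 i1 (by omega) (by omega)))
      rw [hsf1, hsf2]
      exact hmono i1 i2 this (by omega)
    · right
      rw [hsh1, hsh2] at heq
      have hii : i1 = i2 := by
        by_contra hc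
        rcases Nat.lt_or_ge i1 i2 with hlt | hge
        · exact absurd heq (ne_of_lt (hbmono i1 i2 hlt (by omega)))
        · exact absurd heq.symm (ne_of_lt (hbmono i2 i1 (by omega) (by omega)))
      constructor
      · rw [hsf1, hsf2, hii]
      · rw [← hv1, ← hv2]
        exact hmin
  -- the matching is the identity
  have hMk : ∀ j, j < k → M j < k := fun j hj => (hM j hj).1
  have hMmono : ∀ j1 j2, j1 < j2 → j2 < k → M j1 < M j2 := by
    intro j1 j2 h12 hj2
    have hr := htrans j1 j2 (by omega) hj2 (hrh j1 j2 h12 hj2)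
    by_contra hc
    rcases eq_or_lt_of_le (not_lt.mp hc) with he | hlt
    · rw [he] at hr
      exact rankLT_irrefl hr
    · exact rankLT_asymm hr (hrf (M j2) (M j1) hlt (hMk j1 (by omega)))
  have hA : ∀ j, j < k → j ≤ M j := by
    intro j
    induction j with
    | zero => omega
    | succ j' ih =>
      intro hj
      have h1 : j' ≤ M j' := ih (by omega)
      have h2 : M j' < M (j'+1) := hMmono j' (j'+1) (by omega) hj
      omega
  have hB : ∀ d j, j < k → k ≤ j + 1 + d → M j ≤ j := by
    intro d
    induction d with
    | zero =>
      intro j hj hk2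
      have := hMk j hj
      omega
    | succ d ih =>
      intro j hj hk2
      rcases Nat.lt_or_ge (j+1) k with hc | hc
      · have h1 : M (j+1) ≤ j+1 := ih (j+1) hc (by omega)
        have h2 : M j < M (j+1) := hMmono j (j+1) (by omega) hc
        omega
      · have := hMk j hj
        omega
  have hMid : ∀ j, j < k → M j = j :=
    fun j hj => le_antisymm (hB k j hj (by omega)) (hA j hj)
  -- assemble
  refine ⟨hnbpy, b, hb0, hb1, fun i hi => hbmono i (i+1) (by omega) (by omega), hBpyb, ?_, ?_⟩
  · intro i h1 h2
    have := hbwin i h1 h2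
    rw [abs_lt]
    constructor <;> linarith [this.1, this.2]
  · intro j hj i hi u hu1 hu2
    rw [hval j hj i hi u hu1 hu2, hMid j hj]
end CWR
end

section
/- If x is a state with |x| = k ≥ 2 and m breakpoints, then every coalescence C_{i₁,i₂}(x) has exactly k − 1 elements, and its set of breakpoints is contained in the set of breakpoints of x together with possibly the endpoints e_{i₁}(x), b_{i₂}(x); in particular each state reachable from x by one coalescence lies in ⋃_{m' ≤ m+2} V_{m'} ∩ U_{k−1}. -/
open Set MeasureTheory

namespace CWR
private lemma contAt_join (N : ℕ) (f g : Lin N) (s : ℝ)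
    (hf : ContAt N f s) (hg : ContAt N g s) : ContAt N (join N f g) s := by
  obtain ⟨ε1, hε1, h1⟩ := hf
  obtain ⟨ε2, hε2, h2⟩ := hg
  refine ⟨min ε1 ε2, lt_min hε1 hε2, ?_⟩
  intro u hu
  have hu1 : u ∈ Set.Ioo (s - ε1) (s + ε1) := by
    constructor
    · have := hu.1; have : s - ε1 ≤ s - min ε1 ε2 := by
        have := min_le_left ε1 ε2; linarith
      linarith [hu.1]
    · have := min_le_left ε1 ε2; linarith [hu.2]
  have hu2 : u ∈ Set.Ioo (s - ε2) (s + ε2) := by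
    constructor
    · have := min_le_right ε1 ε2; linarith [hu.1]
    · have := min_le_right ε1 ε2; linarith [hu.2]
  simp only [join, h1 u hu1, h2 u hu2]

/-- a coalescence of a state with `k ≥ 2` lineages and `m` breakpoints
has exactly `k − 1` elements, its breakpoints are contained in those of `x` together
with possibly `e_{i₁}(x)` and `b_{i₂}(x)`, and hence it has at most `m + 2` breakpoints. -/
theorem coal_card_breakpoints (N : ℕ) (x : Set (Lin N)) (hx : IsState N x)
    (hk : 2 ≤ x.ncard) (f g : Lin N) (hf : f ∈ x) (hg : g ∈ x) (hfg : f ≠ g) :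
    (coal N x f g).ncard = x.ncard - 1 ∧
    Bp N (coal N x f g) ⊆ Bp N x ∪ {eOf N f, bOf N x g} ∧
    nBp N (coal N x f g) ≤ nBp N x + 2 := by
  obtain ⟨hfin, hmem, hne, hpart⟩ := hx
  -- the joined lineage is not an old lineage
  have hj : join N f g ∉ x \ ({f, g} : Set (Lin N)) := by
    rintro ⟨hjx, hjn⟩
    obtain ⟨s, hs, hfs⟩ := hne f hf
    have hfj : f ≠ join N f g := by
      intro h
      exact hjn (h ▸ Set.mem_insert f {g})
    have hd := (hpart s hs).2 f hf _ hjx hfj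
    have hd' : Disjoint (f s) (f s) :=
      hd.mono_right (le_of_eq_of_le (by simp [join]) (Finset.subset_union_left : f s ⊆ f s ∪ g s))
    exact hfs (disjoint_self.mp hd')
  have hsub : ({f, g} : Set (Lin N)) ⊆ x := by
    intro a ha; rcases ha with rfl | ha
    · exact hf
    · exact (Set.mem_singleton_iff.mp ha) ▸ hg
  have hfin' : (x \ ({f, g} : Set (Lin N))).Finite := hfin.diff
  have hcard : (coal N x f g).ncard = x.ncard - 1 := by
    rw [coal, Set.ncard_insert_of_notMem hj hfin',
      Set.ncard_diff hsub (Set.toFinite _), Set.ncard_pair hfg]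
    omega
  -- breakpoints
  have hBp : Bp N (coal N x f g) ⊆ Bp N x := by
    rintro s ⟨hIoo, h, hhx, hnc⟩
    rcases Set.mem_insert_iff.mp hhx with rfl | ⟨hx', -⟩
    · by_cases hcf : ContAt N f s
      · by_cases hcg : ContAt N g s
        · exact absurd (contAt_join N f g s hcf hcg) hnc
        · exact ⟨hIoo, g, hg, hcg⟩
      · exact ⟨hIoo, f, hf, hcf⟩
    · exact ⟨hIoo, h, hx', hnc⟩
  have hfinBp : (Bp N x).Finite := by
    have hsub2 : Bp N x ⊆ ⋃ f ∈ x, {s ∈ Set.Ioo (0:ℝ) 1 | ¬ ContAt N f s} := by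
      rintro s ⟨h1, h, hh, h2⟩
      exact Set.mem_biUnion hh ⟨h1, h2⟩
    exact (Set.Finite.biUnion hfin fun f hfx => (hmem f hfx).2.1).subset hsub2
  refine ⟨hcard, hBp.trans (Set.subset_union_left), ?_⟩
  exact le_trans (Set.ncard_le_ncard hBp hfinBp) (Nat.le_add_right _ 2)
end CWR
end

section
/- Let E be a countable or standard Borel state space and let q be the coalescent-with-recombination q-pair, a totally stable conservative q-pair with a unique absorbing state Δ, with embedded jump chain Π(x,·) = q(x,·)/q(x); take V(x) = |x| − 1, so that V(Δ) = 0, each coalescence decreases |x| by 1 and each recombination increases |x| by 1, and suppose the ratio of total recombination rate to total coalescence rate from any x with |x| = k is at most ρ/(k−1) · C for a constant C. Then the embedded chain started from any x almost surely reaches Δ in finitely many steps. -/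
open MeasureTheory

noncomputable def CWRpi (r : ℝ) : ℕ → ℝ
  | 0 => 1
  | (k+1) => CWRpi r k * (k+1) / r

noncomputable def CWRS (r : ℝ) : ℕ → ℝ
  | 0 => 0
  | (k+1) => CWRS r k + CWRpi r k

lemma CWRpi_pos {r : ℝ} (hr : 0 < r) (k : ℕ) : 0 < CWRpi r k := by
  induction k with
  | zero => norm_num [CWRpi]
  | succ k ih => exact div_pos (mul_pos ih (by positivity)) hr

lemma CWRS_nonneg {r : ℝ} (hr : 0 < r) (k : ℕ) : 0 ≤ CWRS r k := by
  induction k with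
  | zero => simp [CWRS]
  | succ k ih => have := CWRpi_pos hr k; simp [CWRS]; linarith

lemma CWRS_mono {r : ℝ} (hr : 0 < r) : Monotone (CWRS r) := by
  apply monotone_nat_of_le_succ
  intro k
  have := CWRpi_pos hr k
  simp [CWRS]; linarith

lemma CWRS_one {r : ℝ} : CWRS r 1 = 1 := by norm_num [CWRS, CWRpi]

lemma CWRpi_unbounded {r : ℝ} (hr : 0 < r) (B : ℝ) : ∃ k, B < CWRpi r k := by
  set K : ℕ := ⌈2 * r⌉₊ with hK
  have hKr : 2 * r ≤ K := Nat.le_ceil _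
  have hgrow : ∀ j : ℕ, CWRpi r K * 2 ^ j ≤ CWRpi r (K + j) := by
    intro j
    induction j with
    | zero => simp
    | succ j ih =>
      have h1 : (2:ℝ) * CWRpi r (K + j) ≤ CWRpi r (K + (j+1)) := by
        show (2:ℝ) * CWRpi r (K + j) ≤ CWRpi r ((K + j) + 1)
        rw [CWRpi]
        rw [le_div_iff₀ hr]
        have hpos := CWRpi_pos hr (K + j)
        have hcast : (K:ℝ) ≤ ((K + j : ℕ) : ℝ) := by exact_mod_cast Nat.le_add_right K j
        have : 2 * r ≤ ((K + j : ℕ) + 1 : ℝ) := by linarith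
        nlinarith
      have hpos := CWRpi_pos hr K
      calc CWRpi r K * 2 ^ (j+1) = 2 * (CWRpi r K * 2 ^ j) := by ring
        _ ≤ 2 * CWRpi r (K + j) := by linarith
        _ ≤ CWRpi r (K + (j+1)) := h1
  have hKpos := CWRpi_pos hr K
  obtain ⟨j, hj⟩ := pow_unbounded_of_one_lt (B / CWRpi r K) (by norm_num : (1:ℝ) < 2)
  refine ⟨K + j, ?_⟩
  have : B / CWRpi r K * CWRpi r K < 2 ^ j * CWRpi r K :=
    mul_lt_mul_of_pos_right hj hKpos
  rw [div_mul_cancel₀ _ (ne_of_gt hKpos)] at this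
  calc B < 2 ^ j * CWRpi r K := this
    _ = CWRpi r K * 2 ^ j := by ring
    _ ≤ CWRpi r (K + j) := hgrow j

lemma CWRS_unbounded {r : ℝ} (hr : 0 < r) (B : ℝ) : ∃ M : ℕ, B < CWRS r (M + 1) := by
  obtain ⟨k, hk⟩ := CWRpi_unbounded hr B
  refine ⟨k, ?_⟩
  have := CWRS_nonneg hr k
  show B < CWRS r k + CWRpi r k
  linarith

lemma CWRS_harmonic {r : ℝ} (hr : 0 < r) (m : ℕ) {u : ℝ} (hu0 : 0 ≤ u)
    (hu : u ≤ r / (((m:ℝ)+1) + r)) :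
    CWRS r m * (1 - u) + CWRS r (m+2) * u ≤ CWRS r (m+1) := by
  have hπ := CWRpi_pos hr m
  have hA : (0:ℝ) < ((m:ℝ)+1) + r := by positivity
  have h2 : CWRS r (m+2) = CWRS r m + CWRpi r m + CWRpi r m * ((m:ℝ)+1) / r := by
    show CWRS r (m+1) + CWRpi r (m+1) = _
    show (CWRS r m + CWRpi r m) + CWRpi r m * (((m:ℕ):ℝ)+1) / r = _
    push_cast; ring
  have h1 : CWRS r (m+1) = CWRS r m + CWRpi r m := rfl
  rw [h1, h2]
  have key : u * (CWRpi r m + CWRpi r m * ((m:ℝ)+1) / r) ≤ CWRpi r m := by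
    have hsum : CWRpi r m + CWRpi r m * ((m:ℝ)+1) / r = CWRpi r m * ((((m:ℝ)+1) + r) / r) := by
      field_simp; ring
    rw [hsum]
    have hpos : 0 ≤ CWRpi r m * ((((m:ℝ)+1) + r) / r) := by positivity
    calc u * (CWRpi r m * ((((m:ℝ)+1) + r) / r))
        ≤ (r / (((m:ℝ)+1) + r)) * (CWRpi r m * ((((m:ℝ)+1) + r) / r)) :=
          mul_le_mul_of_nonneg_right hu hpos
      _ = CWRpi r m := by field_simp
  nlinarith [key]

/-- almost-sure absorption of the embedded jump chain of the
coalescent-with-recombination process. `V x = |x| − 1` vanishes exactly at the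
absorbing state `Δ`; from any non-absorbing state the chain moves to a state with
`V` changed by `±1`, and the probability of moving up is at most
`ρC/(V(x) + ρC)` (the ratio of the total recombination rate to the total
coalescence rate being at most `ρC/(k−1)`). Then any Markov chain with these
transition probabilities, started from any `x`, almost surely reaches `Δ`
in finitely many steps. -/
theorem embedded_chain_absorbed
    {E : Type*} [mE : MeasurableSpace E] [MeasurableSingletonClass E]
    (κ : ProbabilityTheory.Kernel E E) [ProbabilityTheory.IsMarkovKernel κ]
    (Δ : E) (V : E → ℕ) (hV : Measurable V)
    (hVΔ : ∀ x, V x = 0 ↔ x = Δ)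
    (habs : κ Δ {Δ} = 1)
    (ρ C : ℝ) (hρ : 0 < ρ) (hC : 0 < C)
    (hstep : ∀ x, x ≠ Δ →
      κ x ({y | V y = V x - 1} ∪ {y | V y = V x + 1}) = 1)
    (hup : ∀ x, x ≠ Δ →
      (κ x {y | V y = V x + 1}).toReal ≤ (ρ * C) / ((V x : ℝ) + ρ * C))
    {Ω : Type*} [mΩ : MeasurableSpace Ω] (μ : Measure Ω) [IsProbabilityMeasure μ]
    (X : ℕ → Ω → E) (hX : ∀ n, Measurable (X n))
    (x0 : E) (hX0 : ∀ ω, X 0 ω = x0)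
    (hMarkov : ∀ (n : ℕ) (A : Set E), MeasurableSet A →
      μ[Set.indicator ((X (n+1)) ⁻¹' A) (fun _ => (1:ℝ)) |
          MeasurableSpace.comap (fun ω (i : Fin (n+1)) => X i ω) MeasurableSpace.pi]
        =ᵐ[μ] fun ω => (κ (X n ω) A).toReal) :
    μ {ω | ∃ n, X n ω = Δ} = 1 := by
  classical
  set r : ℝ := ρ * C with hrdef
  have hr : 0 < r := mul_pos hρ hC
  have hΔ0 : V Δ = 0 := (hVΔ Δ).mpr rfl
  have hpre0 : V ⁻¹' {0} = {Δ} := by ext y; simpa using hVΔ y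
  have hmV : ∀ k : ℕ, MeasurableSet (V ⁻¹' {k}) := fun k => hV (measurableSet_singleton k)
  -- abbreviations
  set S : ℕ → ℝ := CWRS r with hSdef
  set F : ℕ → MeasurableSpace Ω :=
    (fun n => MeasurableSpace.comap (fun ω (i : Fin (n+1)) => X i ω) MeasurableSpace.pi)
    with hFdef
  have hle : ∀ n, F n ≤ mΩ := fun n =>
    Measurable.comap_le (measurable_pi_lambda _ fun i => hX i)
  have hXF : ∀ {j n : ℕ}, j ≤ n → ∀ {B : Set E}, MeasurableSet B →
      MeasurableSet[F n] (X j ⁻¹' B) := by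
    intro j n hjn B hB
    exact ⟨(fun p : Fin (n+1) → E => p ⟨j, Nat.lt_succ_of_le hjn⟩) ⁻¹' B,
      (measurable_pi_apply _) hB, rfl⟩
  have hFmono : ∀ {a b : ℕ}, a ≤ b → F a ≤ F b := by
    intro a b hab
    have hψ : Measurable (fun p : Fin (b+1) → E => fun i : Fin (a+1) =>
        p ⟨(i:ℕ), lt_of_lt_of_le i.2 (by omega)⟩) :=
      measurable_pi_lambda _ fun i => measurable_pi_apply _
    calc F a = MeasurableSpace.comap (fun ω (i : Fin (b+1)) => X i ω)
          (MeasurableSpace.comap (fun p : Fin (b+1) → E => fun i : Fin (a+1) =>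
            p ⟨(i:ℕ), lt_of_lt_of_le i.2 (by omega)⟩) MeasurableSpace.pi) := by
            rw [MeasurableSpace.comap_comp]; rfl
      _ ≤ MeasurableSpace.comap (fun ω (i : Fin (b+1)) => X i ω) MeasurableSpace.pi :=
          MeasurableSpace.comap_mono (Measurable.comap_le hψ)
  -- the key identity derived from the Markov property
  have hkey : ∀ (n : ℕ) (A : Set E), MeasurableSet A → ∀ (G : Set Ω), MeasurableSet[F n] G →
      μ (G ∩ X (n+1) ⁻¹' A) = ∫⁻ ω in G, κ (X n ω) A ∂μ := by
    intro n A hA G hG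
    haveI : SigmaFinite (μ.trim (hle n)) := by infer_instance
    have hAm : MeasurableSet (X (n+1) ⁻¹' A) := (hX (n+1)) hA
    have hint : Integrable (Set.indicator (X (n+1) ⁻¹' A) fun _ => (1:ℝ)) μ :=
      (integrable_const (1:ℝ)).indicator hAm
    have h1 : ∫ ω in G, (κ (X n ω) A).toReal ∂μ
        = ∫ ω in G, Set.indicator (X (n+1) ⁻¹' A) (fun _ => (1:ℝ)) ω ∂μ := by
      rw [← setIntegral_condExp (hle n) hint hG]
      exact (integral_congr_ae (ae_restrict_of_ae (hMarkov n A hA))).symm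
    have hL : ∫ ω in G, Set.indicator (X (n+1) ⁻¹' A) (fun _ => (1:ℝ)) ω ∂μ
        = (μ (G ∩ X (n+1) ⁻¹' A)).toReal := by
      rw [integral_indicator hAm, setIntegral_const, measureReal_def, Measure.restrict_apply hAm,
        smul_eq_mul, mul_one, Set.inter_comm]
    have hmeasκ : Measurable (fun ω => κ (X n ω) A) :=
      (κ.measurable_coe hA).comp (hX n)
    have hR : ∫ ω in G, (κ (X n ω) A).toReal ∂μ = (∫⁻ ω in G, κ (X n ω) A ∂μ).toReal :=
      integral_toReal (hmeasκ.aemeasurable.restrict)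
        (ae_of_all _ fun ω => measure_lt_top _ _)
    have hfin2 : ∫⁻ ω in G, κ (X n ω) A ∂μ ≠ ⊤ := by
      refine ne_of_lt (lt_of_le_of_lt ?_ (?_ : μ G < ⊤))
      · calc ∫⁻ ω in G, κ (X n ω) A ∂μ ≤ ∫⁻ _ω in G, 1 ∂μ :=
            lintegral_mono fun ω => prob_le_one
          _ = μ G := setLIntegral_one G
      · exact measure_lt_top μ G
    exact (ENNReal.toReal_eq_toReal_iff' (measure_ne_top μ _) hfin2).mp
      (by rw [← hL, ← hR]; exact h1.symm)
  -- single down-step lower bound for the kernel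
  set c' : ℝ := 1 / (1 + r) with hc'def
  have hc'pos : 0 < c' := by positivity
  have hc'le1 : c' ≤ 1 := by rw [hc'def]; rw [div_le_one (by linarith)]; linarith
  have hudsum : ∀ x : E, x ≠ Δ →
      κ x (V ⁻¹' {V x - 1}) + κ x (V ⁻¹' {V x + 1}) = 1 := by
    intro x hx
    have hVx : 1 ≤ V x := Nat.one_le_iff_ne_zero.mpr (fun h0 => hx ((hVΔ x).mp h0))
    have hdisj : Disjoint (V ⁻¹' {V x - 1}) (V ⁻¹' {V x + 1}) := by
      apply Set.disjoint_left.mpr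
      intro y h1 h2
      simp only [Set.mem_preimage, Set.mem_singleton_iff] at h1 h2
      omega
    rw [← measure_union hdisj (hmV _)]
    exact hstep x hx
  have hupE : ∀ x : E, x ≠ Δ →
      κ x (V ⁻¹' {V x + 1}) ≤ ENNReal.ofReal (r / ((V x : ℝ) + r)) := by
    intro x hx
    have h2 := hup x hx
    rw [← ENNReal.ofReal_toReal (measure_ne_top (κ x) (V ⁻¹' {V x + 1}))]
    exact ENNReal.ofReal_le_ofReal h2
  have hdown : ∀ x : E, ENNReal.ofReal c' ≤ κ x (V ⁻¹' {V x - 1}) := by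
    intro x
    by_cases hx : x = Δ
    · subst hx
      rw [hΔ0]
      simp only [Nat.zero_sub, hpre0, habs]
      exact ENNReal.ofReal_le_one.mpr hc'le1
    · have hVx : 1 ≤ V x := Nat.one_le_iff_ne_zero.mpr (fun h0 => hx ((hVΔ x).mp h0))
      have hd : κ x (V ⁻¹' {V x - 1}) = 1 - κ x (V ⁻¹' {V x + 1}) := by
        rw [← hudsum x hx]
        rw [ENNReal.add_sub_cancel_right (measure_ne_top _ _)]
      rw [hd]
      have hle2 : κ x (V ⁻¹' {V x + 1}) ≤ ENNReal.ofReal (r / (1 + r)) := by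
        refine le_trans (hupE x hx) (ENNReal.ofReal_le_ofReal ?_)
        have h1 : (1:ℝ) ≤ (V x : ℝ) := by exact_mod_cast hVx
        have h2 : (1:ℝ) + r ≤ (V x : ℝ) + r := by linarith
        exact div_le_div_of_nonneg_left hr.le (by linarith) h2
      have hcval : c' = 1 - r / (1 + r) := by rw [hc'def]; field_simp; ring
      calc ENNReal.ofReal c' = 1 - ENNReal.ofReal (r / (1 + r)) := by
            rw [hcval, ENNReal.ofReal_sub _ (by positivity), ENNReal.ofReal_one]
        _ ≤ 1 - κ x (V ⁻¹' {V x + 1}) := tsub_le_tsub_left hle2 1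
  -- pointwise superharmonicity
  have hSmart : ∀ x : E,
      (∑' k : ℕ, ENNReal.ofReal (S k) * κ x (V ⁻¹' {k})) ≤ ENNReal.ofReal (S (V x)) := by
    intro x
    by_cases hx : x = Δ
    · subst hx
      have hz : ∀ k : ℕ, ENNReal.ofReal (S k) * κ x (V ⁻¹' {k}) = 0 := by
        intro k
        rcases Nat.eq_zero_or_pos k with hk | hk
        · subst hk
          have : S 0 = 0 := rfl
          simp [this]
        · have hsub : V ⁻¹' {k} ⊆ {x}ᶜ := by
            intro y hy
            simp only [Set.mem_preimage, Set.mem_singleton_iff] at hy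
            simp only [Set.mem_compl_iff, Set.mem_singleton_iff]
            intro hyΔ
            rw [hyΔ, hΔ0] at hy
            omega
          have hκc : κ x ({x}ᶜ : Set E) = 0 := by
            have hcc := measure_compl (measurableSet_singleton x) (measure_ne_top (κ x) _)
            rw [habs, measure_univ] at hcc
            simpa using hcc
          have : κ x (V ⁻¹' {k}) = 0 := measure_mono_null hsub hκc
          simp [this]
      simp only [hz, tsum_zero]
      exact zero_le
    · have hVx : 1 ≤ V x := Nat.one_le_iff_ne_zero.mpr (fun h0 => hx ((hVΔ x).mp h0))
      obtain ⟨m, hm⟩ : ∃ m, V x = m + 1 := ⟨V x - 1, by omega⟩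
      have hcompl : κ x ((V ⁻¹' {m} ∪ V ⁻¹' {m+2})ᶜ) = 0 := by
        have h1 : κ x (V ⁻¹' {m} ∪ V ⁻¹' {m+2}) = 1 := by
          have hq : ({y | V y = V x - 1} ∪ {y | V y = V x + 1})
              = (V ⁻¹' {m} ∪ V ⁻¹' {m+2}) := by
            rw [hm]; ext y
            simp only [Set.mem_union, Set.mem_setOf_eq, Set.mem_preimage,
              Set.mem_singleton_iff]
            omega
          rw [← hq]; exact hstep x hx
        have hcc := measure_compl ((hmV m).union (hmV (m+2))) (measure_ne_top (κ x) _)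
        rw [h1, measure_univ] at hcc
        simpa using hcc
      have hzero : ∀ k : ℕ, k ≠ m → k ≠ m+2 → κ x (V ⁻¹' {k}) = 0 := by
        intro k h1 h2
        refine measure_mono_null ?_ hcompl
        intro y hy
        simp only [Set.mem_preimage, Set.mem_singleton_iff] at hy
        simp only [Set.mem_compl_iff, Set.mem_union, Set.mem_preimage,
          Set.mem_singleton_iff]
        omega
      have htsum : (∑' k : ℕ, ENNReal.ofReal (S k) * κ x (V ⁻¹' {k}))
          = ENNReal.ofReal (S m) * κ x (V ⁻¹' {m})
            + ENNReal.ofReal (S (m+2)) * κ x (V ⁻¹' {m+2}) := by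
        rw [tsum_eq_sum (s := ({m, m+2} : Finset ℕ)) ?_]
        · rw [Finset.sum_insert (by simp), Finset.sum_singleton]
        · intro k hk
          simp only [Finset.mem_insert, Finset.mem_singleton, not_or] at hk
          rw [hzero k hk.1 hk.2, mul_zero]
      have hsum2 : κ x (V ⁻¹' {m}) + κ x (V ⁻¹' {m+2}) = 1 := by
        have := hudsum x hx
        rw [hm] at this
        simpa using this
      have hune : κ x (V ⁻¹' {m+2}) ≠ ⊤ := measure_ne_top _ _
      set u : ℝ := (κ x (V ⁻¹' {m+2})).toReal with hudef
      have hu0 : 0 ≤ u := ENNReal.toReal_nonneg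
      have hu1 : u ≤ 1 := by
        rw [hudef]
        refine le_trans (ENNReal.toReal_mono (by simp) prob_le_one) (by simp)
      have hu' : u ≤ r / (((m:ℝ)+1) + r) := by
        have h2 := hup x hx
        rw [hm] at h2
        have : (((m+1 : ℕ)) : ℝ) = (m:ℝ) + 1 := by push_cast; ring
        rw [this] at h2
        exact h2
      have hueq : κ x (V ⁻¹' {m+2}) = ENNReal.ofReal u := (ENNReal.ofReal_toReal hune).symm
      have hdeq : κ x (V ⁻¹' {m}) = ENNReal.ofReal (1 - u) := by
        have hd : κ x (V ⁻¹' {m}) = 1 - κ x (V ⁻¹' {m+2}) := by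
          rw [← hsum2, ENNReal.add_sub_cancel_right hune]
        rw [hd, hueq, ← ENNReal.ofReal_one, ← ENNReal.ofReal_sub _ hu0]
      rw [htsum, hueq, hdeq, hm]
      rw [← ENNReal.ofReal_mul (CWRS_nonneg hr m), ← ENNReal.ofReal_mul (CWRS_nonneg hr (m+2)),
        ← ENNReal.ofReal_add (by nlinarith [CWRS_nonneg hr m])
          (by nlinarith [CWRS_nonneg hr (m+2)])]
      exact ENNReal.ofReal_le_ofReal (CWRS_harmonic hr m hu0 hu')
  -- expectation of S (V (X t)) is bounded by its initial value
  have hW : ∀ t : ℕ, ∫⁻ ω, ENNReal.ofReal (S (V (X t ω))) ∂μ ≤ ENNReal.ofReal (S (V x0)) := by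
    intro t
    induction t with
    | zero =>
      have hc : ∀ ω, ENNReal.ofReal (S (V (X 0 ω))) = ENNReal.ofReal (S (V x0)) :=
        fun ω => by rw [hX0 ω]
      rw [lintegral_congr hc, lintegral_const, measure_univ, mul_one]
    | succ t ih =>
      have hms : ∀ k : ℕ, Measurable fun ω => κ (X t ω) (V ⁻¹' {k}) :=
        fun k => (κ.measurable_coe (hmV k)).comp (hX t)
      have e1 : ∫⁻ ω, ENNReal.ofReal (S (V (X (t+1) ω))) ∂μ
          = ∑' k : ℕ, ENNReal.ofReal (S k) * μ (X (t+1) ⁻¹' (V ⁻¹' {k})) := by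
        have hpt : ∀ ω, ENNReal.ofReal (S (V (X (t+1) ω)))
            = ∑' k : ℕ, Set.indicator (X (t+1) ⁻¹' (V ⁻¹' {k}))
                (fun _ => ENNReal.ofReal (S k)) ω := by
          intro ω
          rw [tsum_eq_single (V (X (t+1) ω)) ?_]
          · rw [Set.indicator_of_mem (by simp : ω ∈ X (t+1) ⁻¹' (V ⁻¹' {V (X (t+1) ω)}))]
          · intro k hk
            rw [Set.indicator_of_notMem]
            simp only [Set.mem_preimage, Set.mem_singleton_iff]
            exact fun h => hk h.symm
        rw [lintegral_congr hpt,
          lintegral_tsum fun k => (measurable_const.indicator ((hX (t+1)) (hmV k))).aemeasurable]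
        exact tsum_congr fun k => lintegral_indicator_const ((hX (t+1)) (hmV k)) _
      have e2 : ∀ k : ℕ, μ (X (t+1) ⁻¹' (V ⁻¹' {k})) = ∫⁻ ω, κ (X t ω) (V ⁻¹' {k}) ∂μ := by
        intro k
        have := hkey t (V ⁻¹' {k}) (hmV k) Set.univ MeasurableSet.univ
        simpa [Measure.restrict_univ] using this
      calc ∫⁻ ω, ENNReal.ofReal (S (V (X (t+1) ω))) ∂μ
          = ∑' k : ℕ, ENNReal.ofReal (S k) * ∫⁻ ω, κ (X t ω) (V ⁻¹' {k}) ∂μ := by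
            rw [e1]; exact tsum_congr fun k => by rw [e2 k]
        _ = ∑' k : ℕ, ∫⁻ ω, ENNReal.ofReal (S k) * κ (X t ω) (V ⁻¹' {k}) ∂μ :=
            tsum_congr fun k => (lintegral_const_mul _ (hms k)).symm
        _ = ∫⁻ ω, ∑' k : ℕ, ENNReal.ofReal (S k) * κ (X t ω) (V ⁻¹' {k}) ∂μ :=
            (lintegral_tsum fun k => ((hms k).const_mul _).aemeasurable).symm
        _ ≤ ∫⁻ ω, ENNReal.ofReal (S (V (X t ω))) ∂μ :=
            lintegral_mono fun ω => hSmart (X t ω)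
        _ ≤ _ := ih
  -- Markov/Chebyshev bound on high levels
  have hS1 : ∀ M : ℕ, (1:ℝ) ≤ S (M+1) := by
    intro M
    rw [← CWRS_one (r := r)]
    exact CWRS_mono hr (by omega)
  have hHigh : ∀ t M : ℕ, μ {ω | M + 1 ≤ V (X t ω)} ≤ ENNReal.ofReal (S (V x0) / S (M+1)) := by
    intro t M
    have hSM1 : (0:ℝ) < S (M+1) := lt_of_lt_of_le one_pos (hS1 M)
    have hsub : {ω | M + 1 ≤ V (X t ω)}
        ⊆ {ω | ENNReal.ofReal (S (M+1)) ≤ ENNReal.ofReal (S (V (X t ω)))} :=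
      fun ω hω => ENNReal.ofReal_le_ofReal (CWRS_mono hr hω)
    have hmeas : AEMeasurable (fun ω => ENNReal.ofReal (S (V (X t ω)))) μ :=
      ((measurable_from_nat (f := fun k => ENNReal.ofReal (S k))).comp
        (hV.comp (hX t))).aemeasurable
    have h2 : ENNReal.ofReal (S (M+1)) * μ {ω | M + 1 ≤ V (X t ω)}
        ≤ ENNReal.ofReal (S (V x0)) :=
      le_trans (mul_le_mul_right (measure_mono hsub) _)
        (le_trans (mul_meas_ge_le_lintegral₀ hmeas _) (hW t))
    rw [ENNReal.ofReal_div_of_pos hSM1]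
    rw [ENNReal.le_div_iff_mul_le (Or.inl (ne_of_gt (ENNReal.ofReal_pos.mpr hSM1)))
      (Or.inl ENNReal.ofReal_ne_top)]
    rw [mul_comm]
    exact h2
  -- down-step event lower bound
  have hdownstep : ∀ (s : ℕ) (G : Set Ω), MeasurableSet[F s] G →
      ENNReal.ofReal c' * μ G ≤ μ (G ∩ {ω | V (X (s+1) ω) = V (X s ω) - 1}) := by
    intro s G hG
    have hGm : MeasurableSet G := hle s G hG
    have hmm : ∀ m : ℕ, MeasurableSet (G ∩ X s ⁻¹' (V ⁻¹' {m})) :=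
      fun m => hGm.inter ((hX s) (hmV m))
    have hmeas_m : ∀ m : ℕ,
        MeasurableSet ((G ∩ X s ⁻¹' (V ⁻¹' {m})) ∩ X (s+1) ⁻¹' (V ⁻¹' {m-1})) :=
      fun m => (hmm m).inter ((hX (s+1)) (hmV (m-1)))
    have hpart : G ∩ {ω | V (X (s+1) ω) = V (X s ω) - 1}
        = ⋃ m : ℕ, (G ∩ X s ⁻¹' (V ⁻¹' {m})) ∩ X (s+1) ⁻¹' (V ⁻¹' {m-1}) := by
      ext ω
      simp only [Set.mem_inter_iff, Set.mem_setOf_eq, Set.mem_iUnion, Set.mem_preimage,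
        Set.mem_singleton_iff]
      constructor
      · rintro ⟨h1, h2⟩; exact ⟨V (X s ω), ⟨h1, rfl⟩, h2⟩
      · rintro ⟨m, ⟨h1, h2⟩, h3⟩; exact ⟨h1, by rw [h2]; exact h3⟩
    have hdisj : Pairwise (Function.onFun Disjoint
        fun m : ℕ => (G ∩ X s ⁻¹' (V ⁻¹' {m})) ∩ X (s+1) ⁻¹' (V ⁻¹' {m-1})) := by
      intro a b hab
      apply Set.disjoint_left.mpr
      rintro ω ⟨⟨_, h1⟩, _⟩ ⟨⟨_, h2⟩, _⟩
      simp only [Set.mem_preimage, Set.mem_singleton_iff] at h1 h2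
      exact hab (h1 ▸ h2 ▸ rfl)
    have hterm : ∀ m : ℕ, ENNReal.ofReal c' * μ (G ∩ X s ⁻¹' (V ⁻¹' {m}))
        ≤ μ ((G ∩ X s ⁻¹' (V ⁻¹' {m})) ∩ X (s+1) ⁻¹' (V ⁻¹' {m-1})) := by
      intro m
      rw [hkey s (V ⁻¹' {m-1}) (hmV _) _ (hG.inter (hXF le_rfl (hmV m)))]
      calc ENNReal.ofReal c' * μ (G ∩ X s ⁻¹' (V ⁻¹' {m}))
          = ∫⁻ _ω in (G ∩ X s ⁻¹' (V ⁻¹' {m})), ENNReal.ofReal c' ∂μ :=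
            (setLIntegral_const _ _).symm
        _ ≤ ∫⁻ ω in (G ∩ X s ⁻¹' (V ⁻¹' {m})), κ (X s ω) (V ⁻¹' {m-1}) ∂μ := by
            refine setLIntegral_mono' (hmm m) fun ω hω => ?_
            have hVm : V (X s ω) = m := hω.2
            have := hdown (X s ω)
            rwa [hVm] at this
    have hcover : G = ⋃ m : ℕ, G ∩ X s ⁻¹' (V ⁻¹' {m}) := by
      ext ω
      simp only [Set.mem_iUnion, Set.mem_inter_iff, Set.mem_preimage, Set.mem_singleton_iff]
      exact ⟨fun h => ⟨V (X s ω), h, rfl⟩, fun ⟨m, h, _⟩ => h⟩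
    have hdisj2 : Pairwise (Function.onFun Disjoint
        fun m : ℕ => G ∩ X s ⁻¹' (V ⁻¹' {m})) := by
      intro a b hab
      apply Set.disjoint_left.mpr
      rintro ω ⟨_, h1⟩ ⟨_, h2⟩
      simp only [Set.mem_preimage, Set.mem_singleton_iff] at h1 h2
      exact hab (h1 ▸ h2 ▸ rfl)
    calc ENNReal.ofReal c' * μ G
        = ENNReal.ofReal c' * ∑' m : ℕ, μ (G ∩ X s ⁻¹' (V ⁻¹' {m})) := by
          conv_lhs => rw [hcover]
          rw [measure_iUnion hdisj2 hmm]
      _ = ∑' m : ℕ, ENNReal.ofReal c' * μ (G ∩ X s ⁻¹' (V ⁻¹' {m})) :=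
          ENNReal.tsum_mul_left.symm
      _ ≤ ∑' m : ℕ, μ ((G ∩ X s ⁻¹' (V ⁻¹' {m})) ∩ X (s+1) ⁻¹' (V ⁻¹' {m-1})) :=
          ENNReal.tsum_le_tsum hterm
      _ = μ (G ∩ {ω | V (X (s+1) ω) = V (X s ω) - 1}) := by
          rw [hpart, measure_iUnion hdisj hmeas_m]
  -- iterated down-steps
  have hDlower : ∀ (t : ℕ) (G : Set Ω), MeasurableSet[F t] G → ∀ i : ℕ,
      ENNReal.ofReal (c' ^ i) * μ G ≤
        μ (G ∩ {ω | ∀ j < i, V (X (t+j+1) ω) = V (X (t+j) ω) - 1}) := by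
    intro t G hG i
    induction i with
    | zero =>
      have h0 : {ω : Ω | ∀ j < 0, V (X (t+j+1) ω) = V (X (t+j) ω) - 1} = Set.univ := by
        ext ω; simp
      rw [h0, Set.inter_univ, pow_zero, ENNReal.ofReal_one, one_mul]
    | succ i ih =>
      have hDi : MeasurableSet[F (t+i)] {ω | ∀ j < i, V (X (t+j+1) ω) = V (X (t+j) ω) - 1} := by
        have heq : {ω : Ω | ∀ j < i, V (X (t+j+1) ω) = V (X (t+j) ω) - 1}
            = ⋂ j ∈ Finset.range i, ⋃ m : ℕ,
              (X (t+j) ⁻¹' (V ⁻¹' {m}) ∩ X (t+j+1) ⁻¹' (V ⁻¹' {m-1})) := by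
          ext ω
          simp only [Set.mem_setOf_eq, Set.mem_iInter, Finset.mem_range, Set.mem_iUnion,
            Set.mem_inter_iff, Set.mem_preimage, Set.mem_singleton_iff]
          constructor
          · intro h j hj; exact ⟨V (X (t+j) ω), rfl, h j hj⟩
          · intro h j hj; obtain ⟨m, h1, h2⟩ := h j hj; rw [h1]; exact h2
        rw [heq]
        refine MeasurableSet.biInter (Set.to_countable _) fun j hj => ?_
        have hj' : j < i := Finset.mem_range.mp hj
        exact MeasurableSet.iUnion fun m =>
          ((hXF (by omega) (hmV m)).inter (hXF (by omega) (hmV (m-1))))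
      have hGDi : MeasurableSet[F (t+i)]
          (G ∩ {ω | ∀ j < i, V (X (t+j+1) ω) = V (X (t+j) ω) - 1}) :=
        MeasurableSet.inter (hFmono (Nat.le_add_right t i) G hG) hDi
      have hstep2 := hdownstep (t+i) _ hGDi
      have hseteq : G ∩ {ω | ∀ j < i+1, V (X (t+j+1) ω) = V (X (t+j) ω) - 1}
          = (G ∩ {ω | ∀ j < i, V (X (t+j+1) ω) = V (X (t+j) ω) - 1})
            ∩ {ω | V (X ((t+i)+1) ω) = V (X (t+i) ω) - 1} := by
        ext ω
        simp only [Set.mem_inter_iff, Set.mem_setOf_eq]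
        constructor
        · rintro ⟨h1, h2⟩
          exact ⟨⟨h1, fun j hj => h2 j (by omega)⟩, h2 i (by omega)⟩
        · rintro ⟨⟨h1, h2⟩, h3⟩
          refine ⟨h1, fun j hj => ?_⟩
          rcases Nat.lt_succ_iff_lt_or_eq.mp hj with h | h
          · exact h2 j h
          · subst h; exact h3
      rw [hseteq]
      calc ENNReal.ofReal (c' ^ (i+1)) * μ G
          = ENNReal.ofReal c' * (ENNReal.ofReal (c' ^ i) * μ G) := by
            rw [← mul_assoc, ← ENNReal.ofReal_mul hc'pos.le]
            congr 2
            rw [pow_succ]; ring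
        _ ≤ ENNReal.ofReal c'
            * μ (G ∩ {ω | ∀ j < i, V (X (t+j+1) ω) = V (X (t+j) ω) - 1}) :=
            mul_le_mul_right ih _
        _ ≤ _ := hstep2
  -- absorption is permanent (a.e.)
  have hstay : ∀ (t M : ℕ), μ (X t ⁻¹' {Δ} ∩ X (t+M) ⁻¹' {Δ}ᶜ) = 0 := by
    intro t M
    induction M with
    | zero =>
      have h0 : X t ⁻¹' {Δ} ∩ X (t+0) ⁻¹' ({Δ}ᶜ : Set E) = ∅ := by
        ext ω; simp
      rw [h0, measure_empty]
    | succ M ih =>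
      have hone : μ (X (t+M) ⁻¹' {Δ} ∩ X ((t+M)+1) ⁻¹' ({Δ}ᶜ : Set E)) = 0 := by
        rw [hkey (t+M) ({Δ}ᶜ) ((measurableSet_singleton Δ).compl) _
          (hXF le_rfl (measurableSet_singleton Δ))]
        have hset : MeasurableSet (X (t+M) ⁻¹' {Δ}) := (hX _) (measurableSet_singleton Δ)
        have hκc : κ Δ ({Δ}ᶜ : Set E) = 0 := by
          have hcc := measure_compl (measurableSet_singleton Δ) (measure_ne_top (κ Δ) _)
          rw [habs, measure_univ] at hcc
          simpa using hcc
        rw [setLIntegral_congr_fun hset (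
          (fun ω (hω : X (t+M) ω ∈ ({Δ} : Set E)) => by
            rw [show X (t+M) ω = Δ from hω, hκc] : ∀ ω ∈ X (t+M) ⁻¹' ({Δ} : Set E),
              κ (X (t+M) ω) ({Δ}ᶜ : Set E) = (fun _ => (0:ENNReal)) ω))]
        simp
      have hsub : X t ⁻¹' {Δ} ∩ X (t+(M+1)) ⁻¹' ({Δ}ᶜ : Set E)
          ⊆ (X t ⁻¹' {Δ} ∩ X (t+M) ⁻¹' ({Δ}ᶜ : Set E))
            ∪ (X (t+M) ⁻¹' {Δ} ∩ X ((t+M)+1) ⁻¹' ({Δ}ᶜ : Set E)) := by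
        rintro ω ⟨h1, h2⟩
        by_cases h : X (t+M) ω = Δ
        · right; exact ⟨h, h2⟩
        · left; exact ⟨h1, h⟩
      refine le_antisymm ?_ zero_le
      calc μ (X t ⁻¹' {Δ} ∩ X (t+(M+1)) ⁻¹' ({Δ}ᶜ : Set E))
          ≤ μ (X t ⁻¹' {Δ} ∩ X (t+M) ⁻¹' ({Δ}ᶜ : Set E))
            + μ (X (t+M) ⁻¹' {Δ} ∩ X ((t+M)+1) ⁻¹' ({Δ}ᶜ : Set E)) :=
            le_trans (measure_mono hsub) (measure_union_le _ _)
        _ = 0 := by rw [ih, hone, add_zero]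
  -- the main recursion on p t = μ (X t ≠ Δ)
  set p : ℕ → ℝ := fun t => (μ (X t ⁻¹' {Δ}ᶜ)).toReal with hpdef
  have hp0 : ∀ t, 0 ≤ p t := fun t => ENNReal.toReal_nonneg
  have hp1 : ∀ t, p t ≤ 1 := by
    intro t
    rw [hpdef]
    exact ENNReal.toReal_le_of_le_ofReal zero_le_one (by simpa using prob_le_one)
  set eps : ℕ → ℝ := fun M => S (V x0) / S (M+1) with hepsdef
  have heps0 : ∀ M, 0 ≤ eps M := by
    intro M
    apply div_nonneg (CWRS_nonneg hr _)
    exact le_trans (by norm_num [CWRS_one]) (CWRS_mono hr (Nat.one_le_iff_ne_zero.mpr (Nat.succ_ne_zero M)))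
  have hrec : ∀ t M : ℕ, p (t+M) ≤ p t - c' ^ M * (p t - eps M) := by
    intro t M
    set A : Set Ω := X t ⁻¹' ({Δ}ᶜ : Set E) with hAdef
    set G : Set Ω := X t ⁻¹' (V ⁻¹' (Set.Icc 1 M)) with hGdef
    set D : Set Ω := {ω | ∀ j < M, V (X (t+j+1) ω) = V (X (t+j) ω) - 1} with hDdef
    have hGF : MeasurableSet[F t] G := hXF le_rfl (hV MeasurableSet.of_discrete)
    have hGm : MeasurableSet G := hle t G hGF
    have hDm : MeasurableSet D := by
      have heq : D = ⋂ j ∈ Finset.range M, ⋃ m : ℕ,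
          (X (t+j) ⁻¹' (V ⁻¹' {m}) ∩ X (t+j+1) ⁻¹' (V ⁻¹' {m-1})) := by
        ext ω
        simp only [hDdef, Set.mem_setOf_eq, Set.mem_iInter, Finset.mem_range, Set.mem_iUnion,
          Set.mem_inter_iff, Set.mem_preimage, Set.mem_singleton_iff]
        constructor
        · intro h j hj; exact ⟨V (X (t+j) ω), rfl, h j hj⟩
        · intro h j hj; obtain ⟨m, h1, h2⟩ := h j hj; rw [h1]; exact h2
      rw [heq]
      refine MeasurableSet.biInter (Set.to_countable _) fun j _ => ?_
      exact MeasurableSet.iUnion fun m =>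
        (((hX _) (hmV m)).inter ((hX _) (hmV (m-1))))
    have hGA : G ⊆ A := by
      intro ω hω
      simp only [hGdef, Set.mem_preimage, Set.mem_Icc] at hω
      simp only [hAdef, Set.mem_preimage, Set.mem_compl_iff, Set.mem_singleton_iff]
      intro hΔ'
      rw [hΔ', hΔ0] at hω
      omega
    have hGDabs : G ∩ D ⊆ X (t+M) ⁻¹' ({Δ} : Set E) := by
      rintro ω ⟨hωG, hωD⟩
      simp only [hGdef, Set.mem_preimage, Set.mem_Icc] at hωG
      simp only [hDdef, Set.mem_setOf_eq] at hωD
      have hiter : ∀ j, j ≤ M → V (X (t+j) ω) = V (X t ω) - j := by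
        intro j hj
        induction j with
        | zero => rfl
        | succ j ihj =>
          have h1 := hωD j (by omega)
          have h2 := ihj (by omega)
          show V (X (t+j+1) ω) = V (X t ω) - (j+1)
          rw [h1, h2]
          omega
      have hfin := hiter M le_rfl
      have : V (X (t+M) ω) = 0 := by omega
      exact (hVΔ _).mp this
    have hAsplit : μ A ≤ μ G + μ {ω | M + 1 ≤ V (X t ω)} := by
      refine le_trans (measure_mono ?_) (measure_union_le _ _)
      intro ω hω
      simp only [hAdef, Set.mem_preimage, Set.mem_compl_iff, Set.mem_singleton_iff] at hω
      have hω1 : 1 ≤ V (X t ω) := Nat.one_le_iff_ne_zero.mpr (fun h0 => hω ((hVΔ _).mp h0))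
      by_cases h : V (X t ω) ≤ M
      · left
        simp only [hGdef, Set.mem_preimage, Set.mem_Icc]
        exact ⟨hω1, h⟩
      · right
        simp only [Set.mem_setOf_eq]
        omega
    have hGD : ENNReal.ofReal (c' ^ M) * μ G ≤ μ (G ∩ D) := hDlower t G hGF M
    have hPfinal : μ (X (t+M) ⁻¹' ({Δ}ᶜ : Set E)) ≤ μ A - μ (G ∩ D) := by
      have h1 : μ (X (t+M) ⁻¹' ({Δ}ᶜ : Set E)) ≤ μ (A ∩ X (t+M) ⁻¹' ({Δ}ᶜ : Set E)) := by
        have hsub : X (t+M) ⁻¹' ({Δ}ᶜ : Set E)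
            ⊆ (A ∩ X (t+M) ⁻¹' ({Δ}ᶜ : Set E))
              ∪ (X t ⁻¹' {Δ} ∩ X (t+M) ⁻¹' ({Δ}ᶜ : Set E)) := by
          intro ω hω
          by_cases h : X t ω = Δ
          · right; exact ⟨h, hω⟩
          · left; exact ⟨h, hω⟩
        calc μ (X (t+M) ⁻¹' ({Δ}ᶜ : Set E))
            ≤ μ (A ∩ X (t+M) ⁻¹' ({Δ}ᶜ : Set E))
              + μ (X t ⁻¹' {Δ} ∩ X (t+M) ⁻¹' ({Δ}ᶜ : Set E)) :=
              le_trans (measure_mono hsub) (measure_union_le _ _)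
          _ = μ (A ∩ X (t+M) ⁻¹' ({Δ}ᶜ : Set E)) := by rw [hstay t M, add_zero]
      have h2 : A ∩ X (t+M) ⁻¹' ({Δ}ᶜ : Set E) ⊆ A \ (G ∩ D) := by
        rintro ω ⟨hωA, hωc⟩
        refine ⟨hωA, fun hωGD => ?_⟩
        exact hωc (hGDabs hωGD)
      have h3 : μ (A \ (G ∩ D)) = μ A - μ (G ∩ D) :=
        measure_diff (fun ω hω => hGA hω.1) (hGm.inter hDm).nullMeasurableSet
          (measure_ne_top μ _)
      exact le_trans h1 (le_trans (measure_mono h2) (le_of_eq h3))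
    -- convert to real numbers
    have hfinA : μ A ≠ ⊤ := measure_ne_top μ _
    have hGDA : μ (G ∩ D) ≤ μ A := measure_mono (fun ω hω => hGA hω.1)
    have hptM : p (t+M) ≤ (μ A).toReal - (μ (G ∩ D)).toReal := by
      have := ENNReal.toReal_mono (by
        exact ne_of_lt (lt_of_le_of_lt (le_trans tsub_le_self le_rfl) hfinA.lt_top)) hPfinal
      rwa [ENNReal.toReal_sub_of_le hGDA hfinA] at this
    have hpt : p t = (μ A).toReal := rfl
    have hGD' : c' ^ M * (μ G).toReal ≤ (μ (G ∩ D)).toReal := by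
      have := ENNReal.toReal_mono (measure_ne_top μ _) hGD
      rwa [ENNReal.toReal_mul, ENNReal.toReal_ofReal (pow_nonneg hc'pos.le M)] at this
    have hhigh' : (μ {ω | M + 1 ≤ V (X t ω)}).toReal ≤ eps M :=
      ENNReal.toReal_le_of_le_ofReal (heps0 M) (hHigh t M)
    have hG' : (μ A).toReal ≤ (μ G).toReal + (μ {ω | M + 1 ≤ V (X t ω)}).toReal := by
      have := ENNReal.toReal_mono
        (by exact ENNReal.add_ne_top.mpr ⟨measure_ne_top μ _, measure_ne_top μ _⟩) hAsplit
      rwa [ENNReal.toReal_add (measure_ne_top μ _) (measure_ne_top μ _)] at this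
    have hcM : 0 ≤ c' ^ M := pow_nonneg hc'pos.le M
    have hkey2 : c' ^ M * ((μ A).toReal - eps M) ≤ (μ (G ∩ D)).toReal := by
      have hG'' : (μ A).toReal - eps M ≤ (μ G).toReal := by linarith
      calc c' ^ M * ((μ A).toReal - eps M) ≤ c' ^ M * (μ G).toReal :=
            mul_le_mul_of_nonneg_left hG'' hcM
        _ ≤ (μ (G ∩ D)).toReal := hGD'
    rw [hpdef]
    show (μ (X (t+M) ⁻¹' ({Δ}ᶜ : Set E))).toReal ≤ _
    have : p t - c' ^ M * (p t - eps M) = (μ A).toReal - c' ^ M * ((μ A).toReal - eps M) := by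
      rw [hpt]
    rw [this]
    linarith
  -- conclude: inf p = 0
  have hL0 : ∀ η : ℝ, 0 < η → ∃ t, p t < η := by
    have hbdd : BddBelow (Set.range p) := ⟨0, by rintro y ⟨t, rfl⟩; exact hp0 t⟩
    set L : ℝ := ⨅ t, p t with hLdef
    have hLle : ∀ t, L ≤ p t := fun t => ciInf_le hbdd t
    have hLM : ∀ M : ℕ, L ≤ eps M := by
      intro M
      have hc'M : 0 < c' ^ M := pow_pos hc'pos M
      have hc'M1 : c' ^ M ≤ 1 := pow_le_one₀ hc'pos.le hc'le1
      have hckey : ∀ δ : ℝ, 0 < δ → c' ^ M * (L - eps M) ≤ (1 - c' ^ M) * δ := by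
        intro δ hδ
        obtain ⟨t, ht⟩ : ∃ t, p t < L + δ := by
          by_contra h
          push_neg at h
          have : L + δ ≤ L := le_ciInf h
          linarith
        have h1 := hrec t M
        have h2 := hLle (t+M)
        have h3 := hLle t
        nlinarith [mul_le_mul_of_nonneg_left (le_of_lt ht) (sub_nonneg.mpr hc'M1)]
      have h0 : c' ^ M * (L - eps M) ≤ 0 := by
        by_contra h
        push_neg at h
        have hK : 0 ≤ 1 - c' ^ M := by linarith
        have hδ : 0 < c' ^ M * (L - eps M) / (2 * (1 - c' ^ M) + 2) := by positivity
        have h2 : (1 - c' ^ M) * (c' ^ M * (L - eps M) / (2 * (1 - c' ^ M) + 2))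
            ≤ c' ^ M * (L - eps M) / 2 := by
          rw [mul_div_assoc']
          rw [div_le_div_iff₀ (by linarith) (by norm_num)]
          nlinarith
        linarith [hckey _ hδ]
      nlinarith
    intro η hη
    obtain ⟨M, hM⟩ := CWRS_unbounded hr (S (V x0) / η)
    have hepslt : eps M < η := by
      have hSM1 : (0:ℝ) < S (M+1) := lt_of_lt_of_le one_pos (hS1 M)
      rw [hepsdef]
      rw [div_lt_iff₀ hSM1]
      have h2 : S (V x0) < S (M+1) * η := (div_lt_iff₀ hη).mp hM
      linarith
    have hLlt : L < η := lt_of_le_of_lt (hLM M) hepslt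
    obtain ⟨t, ht⟩ := exists_lt_of_ciInf_lt hLlt
    exact ⟨t, ht⟩
  -- final step
  have hNm : MeasurableSet (⋂ n, X n ⁻¹' ({Δ}ᶜ : Set E)) :=
    MeasurableSet.iInter fun n => (hX n) (measurableSet_singleton Δ).compl
  have hN0 : μ (⋂ n, X n ⁻¹' ({Δ}ᶜ : Set E)) = 0 := by
    have hub : ∀ t, (μ (⋂ n, X n ⁻¹' ({Δ}ᶜ : Set E))).toReal ≤ p t := fun t =>
      ENNReal.toReal_mono (measure_ne_top μ _) (measure_mono (Set.iInter_subset _ t))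
    have hle0 : (μ (⋂ n, X n ⁻¹' ({Δ}ᶜ : Set E))).toReal ≤ 0 := by
      by_contra h
      push_neg at h
      obtain ⟨t, ht⟩ := hL0 _ h
      exact absurd (hub t) (not_le.mpr ht)
    have h0 : (μ (⋂ n, X n ⁻¹' ({Δ}ᶜ : Set E))).toReal = 0 :=
      le_antisymm hle0 ENNReal.toReal_nonneg
    exact ((ENNReal.toReal_eq_zero_iff _).mp h0).resolve_right (measure_ne_top μ _)
  have hset : {ω | ∃ n, X n ω = Δ} = (⋂ n, X n ⁻¹' ({Δ}ᶜ : Set E))ᶜ := by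
    ext ω
    simp [Set.mem_iInter]
  rw [hset, measure_compl hNm (measure_ne_top μ _), hN0, measure_univ, tsub_zero]
end
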